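/- arXiv:2604.25360 — 6 statements merged into one kernel-verified Lean document; each statement's English description precedes it below -/
import Mathlib

section
/- Let t ∈ (0, 1/2), z = sqrt(1-4t²), α₁ = (1+z)/2, α₂ = (1-z)/2. Define Q(t,s) = (α₂ + t)e^{α₁ s} - (α₁ + t)e^{α₂ s} and F(t,s) = -(e^{-s}/t) · (∂/∂s) ln Q(t,s). Then F satisfies the Riccati equation ∂F/∂s = t e^s F² + t e^{-s} with F(t,0) = 1. -/
/-- F(t,s) = -(e^{-s}/t) ∂_s ln Q(t,s) solves the Riccati equation
∂F/∂s = t e^s F² + t e^{-s} with F(t,0) = 1. -/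
theorem stmt3 (t : ℝ) (ht : t ∈ Set.Ioo (0 : ℝ) (1/2)) :
    let z := Real.sqrt (1 - 4 * t ^ 2)
    let α₁ := (1 + z) / 2
    let α₂ := (1 - z) / 2
    let Q : ℝ → ℝ := fun s => (α₂ + t) * Real.exp (α₁ * s) - (α₁ + t) * Real.exp (α₂ * s)
    let F : ℝ → ℝ := fun s => -(Real.exp (-s) / t) * deriv (fun u => Real.log (Q u)) s
    F 0 = 1 ∧
      ∀ s : ℝ, Q s ≠ 0 →
        HasDerivAt F (t * Real.exp s * F s ^ 2 + t * Real.exp (-s)) s := by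
  obtain ⟨ht0, ht1⟩ := ht
  intro z α₁ α₂ Q F
  have ht0' : t ≠ 0 := ne_of_gt ht0
  have hpos : (0:ℝ) < 1 - 4 * t ^ 2 := by nlinarith
  have hz2 : z ^ 2 = 1 - 4 * t ^ 2 := Real.sq_sqrt hpos.le
  have hzpos : 0 < z := Real.sqrt_pos.mpr hpos
  have ha1 : α₁ ^ 2 = α₁ - t ^ 2 := by
    show ((1 + z) / 2) ^ 2 = (1 + z) / 2 - t ^ 2
    linear_combination hz2 / 4
  have ha2 : α₂ ^ 2 = α₂ - t ^ 2 := by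
    show ((1 - z) / 2) ^ 2 = (1 - z) / 2 - t ^ 2
    linear_combination hz2 / 4
  set Qd : ℝ → ℝ := fun u =>
    α₁ * (α₂ + t) * Real.exp (α₁ * u) - α₂ * (α₁ + t) * Real.exp (α₂ * u) with hQd
  set Qdd : ℝ → ℝ := fun u =>
    α₁ ^ 2 * (α₂ + t) * Real.exp (α₁ * u) - α₂ ^ 2 * (α₁ + t) * Real.exp (α₂ * u) with hQdd
  have hExp : ∀ (c u : ℝ), HasDerivAt (fun v => Real.exp (c * v)) (c * Real.exp (c * u)) u := by
    intro c u
    simpa [mul_comm, Function.comp_def] using (Real.hasDerivAt_exp (c * u)).comp u ((hasDerivAt_id u).const_mul c)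
  have hQderiv : ∀ u, HasDerivAt Q (Qd u) u := by
    intro u
    have h := ((hExp α₁ u).const_mul (α₂ + t)).sub ((hExp α₂ u).const_mul (α₁ + t))
    exact h.congr_deriv (by simp only [hQd]; ring)
  have hQdderiv : ∀ u, HasDerivAt Qd (Qdd u) u := by
    intro u
    have h := ((hExp α₁ u).const_mul (α₁ * (α₂ + t))).sub ((hExp α₂ u).const_mul (α₂ * (α₁ + t)))
    exact h.congr_deriv (by simp only [hQdd]; ring)
  have hKey : ∀ u, Qdd u = Qd u - t ^ 2 * Q u := by
    intro u
    show α₁ ^ 2 * (α₂ + t) * Real.exp (α₁ * u) - α₂ ^ 2 * (α₁ + t) * Real.exp (α₂ * u)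
      = (α₁ * (α₂ + t) * Real.exp (α₁ * u) - α₂ * (α₁ + t) * Real.exp (α₂ * u))
        - t ^ 2 * ((α₂ + t) * Real.exp (α₁ * u) - (α₁ + t) * Real.exp (α₂ * u))
    linear_combination Real.exp (α₁ * u) * (α₂ + t) * ha1 - Real.exp (α₂ * u) * (α₁ + t) * ha2
  have hlog : ∀ u, Q u ≠ 0 → deriv (fun v => Real.log (Q v)) u = Qd u / Q u := by
    intro u hu
    exact ((hQderiv u).log hu).deriv
  have hQ0 : Q 0 = -z := by
    show (α₂ + t) * Real.exp (α₁ * 0) - (α₁ + t) * Real.exp (α₂ * 0) = -z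
    simp only [mul_zero, Real.exp_zero, mul_one]
    show ((1 - z) / 2 + t) - ((1 + z) / 2 + t) = -z
    ring
  have hQ0ne : Q 0 ≠ 0 := by rw [hQ0]; exact neg_ne_zero.mpr (ne_of_gt hzpos)
  constructor
  · show -(Real.exp (-(0:ℝ)) / t) * deriv (fun u => Real.log (Q u)) 0 = 1
    rw [hlog 0 hQ0ne, hQ0]
    have hQd0 : Qd 0 = t * z := by
      show α₁ * (α₂ + t) * Real.exp (α₁ * 0) - α₂ * (α₁ + t) * Real.exp (α₂ * 0) = t * z
      simp only [mul_zero, Real.exp_zero, mul_one]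
      show (1 + z) / 2 * ((1 - z) / 2 + t) - (1 - z) / 2 * ((1 + z) / 2 + t) = t * z
      ring
    rw [hQd0]
    simp only [neg_zero, Real.exp_zero]
    field_simp
  · intro s hQs
    set G : ℝ → ℝ := fun u => -(Real.exp (-u) / t * (Qd u / Q u)) with hG
    have hFG : F =ᶠ[nhds s] G := by
      have : ∀ᶠ u in nhds s, Q u ≠ 0 :=
        (hQderiv s).continuousAt.eventually_ne hQs
      filter_upwards [this] with u hu
      show -(Real.exp (-u) / t) * deriv (fun v => Real.log (Q v)) u = _
      rw [hlog u hu]; ring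
    have hE : HasDerivAt (fun u : ℝ => Real.exp (-u)) (-Real.exp (-s)) s := by
      simpa [Function.comp_def] using (Real.hasDerivAt_exp (-s)).comp s (hasDerivAt_neg s)
    have hRatio : HasDerivAt (fun u => Qd u / Q u)
        ((Qdd s * Q s - Qd s * Qd s) / Q s ^ 2) s := (hQdderiv s).div (hQderiv s) hQs
    have hGd : HasDerivAt G
        (-((-Real.exp (-s) / t) * (Qd s / Q s)
          + (Real.exp (-s) / t) * ((Qdd s * Q s - Qd s * Qd s) / Q s ^ 2))) s :=
      ((hE.div_const t).mul hRatio).neg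
    have hFs : F s = -(Real.exp (-s) / t) * (Qd s / Q s) := by
      show -(Real.exp (-s) / t) * deriv (fun v => Real.log (Q v)) s = _
      rw [hlog s hQs]
    have hval : t * Real.exp s * F s ^ 2 + t * Real.exp (-s)
        = -((-Real.exp (-s) / t) * (Qd s / Q s)
          + (Real.exp (-s) / t) * ((Qdd s * Q s - Qd s * Qd s) / Q s ^ 2)) := by
      rw [hFs, hKey s, Real.exp_neg]
      field_simp
      ring
    rw [hval]
    exact hGd.congr_of_eventuallyEq hFG
end

section
/- With Q and R as above, the following expansion holds: Q(t,s)/R(t,s) = (e^s / t³) · ( z · Σ_{i=0}^∞ (tC)^{3i} e^{-z i s} − α₁² ), valid for t ∈ (0,1/2) and s ≥ 0 where the geometric series converges (|tC| < 1). -/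
set_option maxHeartbeats 1000000 in
/-- the expansion Q/R = (e^s/t³)(z Σ_{i≥0} (tC)^{3i} e^{-z i s} - α₁²). -/
theorem stmt6 (t : ℝ) (ht : t ∈ Set.Ioo (0 : ℝ) (1/2)) :
    let z := Real.sqrt (1 - 4 * t ^ 2)
    let α₁ := (1 + z) / 2
    let α₂ := (1 - z) / 2
    let C := (1 - z) / (2 * t ^ 2)
    let Q : ℝ → ℝ := fun s => (α₂ + t) * Real.exp (α₁ * s) - (α₁ + t) * Real.exp (α₂ * s)
    let R : ℝ → ℝ := fun s =>
      α₂ * (α₂ + t) * Real.exp (-(α₁ * s)) - α₁ * (α₁ + t) * Real.exp (-(α₂ * s))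
    |t * C| < 1 →
      ∀ s : ℝ, 0 ≤ s →
        Q s / R s =
          Real.exp s / t ^ 3 *
            (z * (∑' i : ℕ, (t * C) ^ (3 * i) * Real.exp (-(z * i * s))) - α₁ ^ 2) := by
  intro z α₁ α₂ C Q R htc s hs
  obtain ⟨ht0, ht2⟩ := ht
  have h4 : (0:ℝ) ≤ 1 - 4 * t ^ 2 := by nlinarith
  have hz2 : z ^ 2 = 1 - 4 * t ^ 2 := Real.sq_sqrt h4
  have hz0 : 0 ≤ z := Real.sqrt_nonneg _
  have hz1 : z < 1 := by nlinarith [sq_nonneg z]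
  have hzpos : 0 < z := Real.sqrt_pos.2 (by nlinarith)
  have hQ : ∀ x, Q x = (α₂ + t) * Real.exp (α₁ * x) - (α₁ + t) * Real.exp (α₂ * x) :=
    fun _ => rfl
  have hR : ∀ x, R x =
      α₂ * (α₂ + t) * Real.exp (-(α₁ * x)) - α₁ * (α₁ + t) * Real.exp (-(α₂ * x)) :=
    fun _ => rfl
  have hA1 : α₁ = (1 + z) / 2 := rfl
  have hA2 : α₂ = (1 - z) / 2 := rfl
  have hC : C = (1 - z) / (2 * t ^ 2) := rfl
  clear_value z α₁ α₂ C Q R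
  have ha2 : (0:ℝ) < α₂ := by rw [hA2]; linarith
  have ha1 : α₂ < α₁ := by rw [hA1, hA2]; linarith
  have hsum12 : α₁ + α₂ = 1 := by rw [hA1, hA2]; ring
  have hprod : α₁ * α₂ = t ^ 2 := by rw [hA1, hA2]; nlinarith
  have hzd : z = α₁ - α₂ := by rw [hA1, hA2]; ring
  have hr0 : 0 ≤ t * C := by
    rw [hC]; exact mul_nonneg ht0.le (div_nonneg (by linarith) (by positivity))
  set r : ℝ := (t * C) ^ 3 * Real.exp (-(z * s)) with hrdef
  have hrlt : r < 1 := by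
    have h1 : (t*C)^3 < 1 := by
      calc (t*C)^3 ≤ |t*C|^3 := pow_le_pow_left₀ hr0 (le_abs_self _) 3
        _ < 1 := pow_lt_one₀ (abs_nonneg _) htc (by norm_num)
    have h2 : Real.exp (-(z*s)) ≤ 1 := Real.exp_le_one_iff.2 (by nlinarith)
    nlinarith [pow_nonneg hr0 3, Real.exp_pos (-(z*s))]
  have hrnn : 0 ≤ r := mul_nonneg (pow_nonneg hr0 3) (Real.exp_pos _).le
  have hsum : (∑' i : ℕ, (t * C) ^ (3 * i) * Real.exp (-(z * i * s))) = (1 - r)⁻¹ := by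
    have key : ∀ i : ℕ, (t * C) ^ (3 * i) * Real.exp (-(z * i * s)) = r ^ i := by
      intro i
      rw [hrdef, show -(z * (i:ℝ) * s) = (i:ℕ) * (-(z*s)) by ring,
        Real.exp_nat_mul, pow_mul, ← mul_pow]
    rw [tsum_congr key, tsum_geometric_of_lt_one hrnn hrlt]
  rw [hsum, hQ, hR]
  set u : ℝ := Real.exp (α₁ * s) with hu
  set v : ℝ := Real.exp (α₂ * s) with hv
  have hu0 : 0 < u := Real.exp_pos _
  have hv0 : 0 < v := Real.exp_pos _
  have huv : v ≤ u := Real.exp_le_exp.2 (by nlinarith)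
  have hes : Real.exp s = u * v := by
    rw [hu, hv, ← Real.exp_add, show α₁ * s + α₂ * s = (α₁ + α₂) * s by ring, hsum12,
      one_mul]
  have hnu : Real.exp (-(α₁ * s)) = u⁻¹ := by rw [hu, ← Real.exp_neg]
  have hnv : Real.exp (-(α₂ * s)) = v⁻¹ := by rw [hv, ← Real.exp_neg]
  have hzs : Real.exp (-(z * s)) = v / u := by
    rw [hu, hv, ← Real.exp_sub, show α₂ * s - α₁ * s = -((α₁ - α₂) * s) by ring, ← hzd]
  have hRne : α₂ * (α₂ + t) * Real.exp (-(α₁ * s)) - α₁ * (α₁ + t) * Real.exp (-(α₂ * s)) ≠ 0 := by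
    rw [hnu, hnv]
    have hui : u⁻¹ ≤ v⁻¹ := inv_anti₀ hv0 huv
    have hvi : (0:ℝ) < v⁻¹ := by positivity
    have key : α₂ * (α₂ + t) < α₁ * (α₁ + t) := by nlinarith
    have h1 : α₂ * (α₂ + t) * u⁻¹ ≤ α₂ * (α₂ + t) * v⁻¹ :=
      mul_le_mul_of_nonneg_left hui (mul_nonneg ha2.le (by linarith))
    have h2 : α₂ * (α₂ + t) * v⁻¹ < α₁ * (α₁ + t) * v⁻¹ :=
      mul_lt_mul_of_pos_right key hvi
    intro h; nlinarith
  have h1r : (1:ℝ) - r ≠ 0 := by linarith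
  rw [div_eq_iff hRne, hes, hnu, hnv, hrdef, hzs, hC]
  have htc' : t * ((1 - z) / (2 * t ^ 2)) = α₂ / t := by
    rw [hA2]; field_simp
  rw [htc']
  have h1r' : 1 - (α₂ / t) ^ 3 * (v / u) ≠ 0 := by
    rw [← htc', ← hzs, ← hC]; exact h1r
  have hre : r = (α₂/t)^3 * (v/u) := by rw [hrdef, hzs, hC, htc']
  have hden : t^3*u - α₂^3*v = t^3*u*(1-r) := by rw [hre]; field_simp
  have h1rpos : 0 < 1 - r := by linarith
  have hdne : t^3*u - α₂^3*v ≠ 0 := by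
    rw [hden]; exact ne_of_gt (by positivity)
  rw [hzd]
  field_simp
  linear_combination ((-1)*t^6*u^2*v^2 + (-1)*α₂*t^4*u^2*v^2 + (-1)*α₂*t^5*u^2*v^2 + α₂*t^5*u^3*v + (-1)*α₂^2*t^2*u^2*v^2 + (-1)*α₂^2*t^3*u^2*v^2 + 2*α₂^3*t^2*u^2*v^2 + α₂^3*t^3*u*v^3 + α₂^4*t^2*u*v^3 + (-1)*α₂^4*t^2*u^2*v^2 + α₁*α₂*t^4*u^2*v^2 + α₁*α₂*t^4*u^3*v + α₁*α₂^2*t^3*u^2*v^2 + (-1)*α₁*α₂^2*t^3*u^3*v + α₁*α₂^3*u^2*v^2 + α₁*α₂^3*t*u^2*v^2 + (-2)*α₁*α₂^4*u^2*v^2 + (-1)*α₁*α₂^4*t*u*v^3 + (-1)*α₁*α₂^4*t*u^2*v^2 + (-1)*α₁*α₂^5*u*v^3 + α₁*α₂^5*u^2*v^2 + (-1)*α₁^2*t^4*u^3*v + α₁^2*α₂*t^3*u^3*v + α₁^2*α₂^3*u^2*v^2 + α₁^2*α₂^3*t*u^2*v^2 + (-1)*α₁^2*α₂^4*u^2*v^2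 + (-1)*α₁^3*t^3*u^3*v + α₁^3*α₂^3*u^2*v^2) * hsum12 + (t^4*u^2*v^2 + t^5*u^2*v^2 + (-1)*t^5*u^3*v + α₂*t^2*u^2*v^2 + α₂*t^3*u^2*v^2 + (-1)*α₂*t^3*u^3*v + (-1)*α₂*t^4*u^2*v^2 + (-1)*α₂*t^4*u^3*v + α₂^2*u^2*v^2 + α₂^2*t*u^2*v^2 + (-2)*α₂^2*t^2*u^2*v^2 + (-1)*α₂^2*t^3*u^2*v^2 + α₂^2*t^3*u^3*v + (-3)*α₂^3*u^2*v^2 + (-1)*α₂^3*t*u*v^3 + (-2)*α₂^3*t*u^2*v^2 + (-1)*α₂^3*t^2*u*v^3 + α₂^3*t^2*u^2*v^2 + (-1)*α₂^4*u*v^3 + 3*α₂^4*u^2*v^2 + α₂^4*t*u*v^3 + α₂^4*t*u^2*v^2 + α₂^5*u*v^3 + (-1)*α₂^5*u^2*v^2) * hprod + ((-1*t^3*α₁^3*u^2) + (1*t^3*α₁^3*u^3*v) + (1*α₁^3*α₂^3*u*v) + (-1*α₁^3*α₂^3*u^2*v^2) + (1*t*α₁^2*α₂^3*u*v) + (-1*t*α₁^2*α₂^3*u^2*v^2)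 + (-1*t^4*α₁^2*u^2) + (1*t^4*α₁^2*u^3*v) + (1*t^3*α₁^2*α₂*u^2) + (-1*t^3*α₁^2*α₂*u^3*v) + (-1*α₁^2*α₂^4*u*v) + (1*α₁^2*α₂^3*u*v) + (1*α₁^2*α₂^4*u^2*v^2) + (-1*α₁^2*α₂^3*u^2*v^2) + (1*t*α₁*α₂^4*u*v^3) + (-1*t*α₁*α₂^4*v^2) + (1*t^3*α₁*α₂^2*u*v) + (-1*t^3*α₁*α₂^2*u^2*v^2) + (1*t^4*α₁*α₂*u*v) + (-1*t^4*α₁*α₂*u^2*v^2) + (1*α₁*α₂^5*u*v^3) + (-1*α₁*α₂^5*v^2) + (-1*t*α₁*α₂^4*u*v) + (1*t*α₁*α₂^3*u*v) + (1*t*α₁*α₂^4*u^2*v^2) + (-1*t*α₁*α₂^3*u^2*v^2) + (1*t^4*α₁*α₂*u^2) + (-1*t^4*α₁*α₂*u^3*v) + (-1*t^3*α₁*α₂^2*u^2) + (1*t^3*α₁*α₂^2*u^3*v) + (1*α₁*α₂^5*u*v) + (-2*α₁*α₂^4*u*v) + (1*α₁*α₂^3*u*v) + (-1*α₁*α₂^5*u^2*v^2)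 + (2*α₁*α₂^4*u^2*v^2) + (-1*α₁*α₂^3*u^2*v^2) + (-1*t^3*α₂^3*u*v^3) + (1*t^3*α₂^3*v^2) + (-1*t^6*u*v) + (1*t^6*u^2*v^2) + (-1*t^5*α₂*u*v) + (1*t^5*α₂*u^2) + (1*t^5*α₂*u^2*v^2) + (-1*t^5*α₂*u^3*v) + (-1*t^4*α₂*u*v) + (1*t^4*α₂*u^2*v^2) + (-1*t^3*α₂^2*u*v) + (1*t^3*α₂^2*u^2*v^2) + (-1*t^2*α₂^4*u*v^3) + (1*t^2*α₂^4*v^2) + (-1*t^2*α₂^4*u*v) + (2*t^2*α₂^3*u*v) + (-1*t^2*α₂^2*u*v) + (1*t^2*α₂^4*u^2*v^2) + (-2*t^2*α₂^3*u^2*v^2) + (1*t^2*α₂^2*u^2*v^2)) * hsum12 + ((1*t^5*u*v) + (-1*t^5*u^2) + (-1*t^5*u^2*v^2) + (1*t^5*u^3*v) + (-1*t^4*α₂*u^2) + (1*t^4*α₂*u^3*v) + (-1*t^4*α₂*u*v) + (1*t^4*u*v) + (1*t^4*α₂*u^2*v^2) + (-1*t^4*u^2*v^2) + (-1*t^3*α₂^2*u*v)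 + (1*t^3*α₂*u*v) + (1*t^3*α₂^2*u^2) + (-1*t^3*α₂*u^2) + (1*t^3*α₂^2*u^2*v^2) + (-1*t^3*α₂*u^2*v^2) + (-1*t^3*α₂^2*u^3*v) + (1*t^3*α₂*u^3*v) + (1*t^2*α₂^3*u*v^3) + (-1*t^2*α₂^3*v^2) + (1*t^2*α₂^3*u*v) + (-2*t^2*α₂^2*u*v) + (1*t^2*α₂*u*v) + (-1*t^2*α₂^3*u^2*v^2) + (2*t^2*α₂^2*u^2*v^2) + (-1*t^2*α₂*u^2*v^2) + (-1*t*α₂^4*u*v^3) + (1*t*α₂^3*u*v^3) + (1*t*α₂^4*v^2) + (-1*t*α₂^3*v^2) + (1*t*α₂^4*u*v) + (-2*t*α₂^3*u*v) + (1*t*α₂^2*u*v) + (-1*t*α₂^4*u^2*v^2) + (2*t*α₂^3*u^2*v^2) + (-1*t*α₂^2*u^2*v^2) + (-1*α₂^5*u*v^3) + (1*α₂^4*u*v^3) + (1*α₂^5*v^2) + (-1*α₂^4*v^2) + (-1*α₂^5*u*v) + (3*α₂^4*u*v) + (-3*α₂^3*u*v) + (1*α₂^2*u*v) + (1*α₂^5*u^2*v^2)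 + (-3*α₂^4*u^2*v^2) + (3*α₂^3*u^2*v^2) + (-1*α₂^2*u^2*v^2)) * hprod
end

section
/- Let n, p, q be integers with n ≥ 1, p ≥ 0, q ≥ 0, n − p even and nonnegative, and let a, b be reals. Let C = C(t²) be the Catalan generating function in t² and z = sqrt(1−4t²) = 2/C − 1 as a formal power series in t. Then [t^n] (tC)^p (a + b z)^q = [u^{(n−p)/2}] (u+1)^{n−q−1} ((a−b)u + (a+b))^q (1−u), where the right side is a coefficient extraction of formal power series in u. -/
open PowerSeries Finset

noncomputable section
namespace Stmt10

def cat : PowerSeries ℝ := PowerSeries.mk fun m => if Even m then (catalan (m / 2) : ℝ) else 0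

lemma coeff_cat_even (m : ℕ) : coeff (2 * m) cat = catalan m := by
  simp [cat, Nat.mul_div_cancel_left, even_two_mul]

lemma coeff_cat_odd {m : ℕ} (h : Odd m) : coeff m cat = 0 := by
  simp [cat, Nat.not_even_iff_odd.mpr h]

lemma constantCoeff_cat : constantCoeff cat = 1 := by
  have := coeff_cat_even 0
  simpa using this

lemma coeff_cat_mul_cat_odd {k : ℕ} (h : Odd k) : coeff k (cat * cat) = 0 := by
  rw [PowerSeries.coeff_mul]
  apply Finset.sum_eq_zero
  intro ij hij
  rw [Finset.HasAntidiagonal.mem_antidiagonal] at hij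
  rcases Nat.even_or_odd ij.1 with he | ho
  · have : Odd ij.2 := by
      rcases he with ⟨c, hc⟩; rcases h with ⟨d, hd⟩; exact ⟨d - c, by omega⟩
    rw [coeff_cat_odd this, mul_zero]
  · rw [coeff_cat_odd ho, zero_mul]

lemma coeff_cat_mul_cat_even (m : ℕ) :
    coeff (2 * m) (cat * cat) = ∑ i ∈ range (m + 1), (catalan i : ℝ) * catalan (m - i) := by
  rw [PowerSeries.coeff_mul, Finset.Nat.sum_antidiagonal_eq_sum_range_succ_mk]
  rw [show (range (m + 1)).sum (fun i => (catalan i : ℝ) * catalan (m - i)) =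
      ∑ k ∈ (range (m + 1)).image (fun i => 2 * i),
        coeff k cat * coeff (2 * m - k) cat from ?_]
  · apply (Finset.sum_subset ?_ ?_).symm
    · intro x hx
      simp only [Finset.mem_image, Finset.mem_range] at hx ⊢
      omega
    · intro x hx hnx
      simp only [Finset.mem_image, Finset.mem_range] at hx hnx
      have hodd : Odd x := by
        rcases Nat.even_or_odd x with ⟨c, hc⟩ | h
        · exact absurd ⟨c, by omega, by omega⟩ hnx
        · exact h
      rw [coeff_cat_odd hodd, zero_mul]
  · rw [Finset.sum_image (by intro x _ y _ h; simp only at h; omega)]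
    apply Finset.sum_congr rfl
    intro i hi
    rw [Finset.mem_range] at hi
    rw [coeff_cat_even, show 2 * m - 2 * i = 2 * (m - i) from by omega, coeff_cat_even]

lemma cat_eq : cat = 1 + X ^ 2 * cat ^ 2 := by
  ext n
  rw [map_add, PowerSeries.coeff_one, sq cat, PowerSeries.coeff_X_pow_mul']
  rcases Nat.even_or_odd n with ⟨m, hm⟩ | hodd
  · rcases m with _ | m
    · have h0 : n = 0 := by omega
      subst h0
      simpa using constantCoeff_cat
    · have h2 : n = 2 * (m + 1) := by omega
      subst h2
      rw [if_neg (by omega), if_pos (by omega), coeff_cat_even,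
        show 2 * (m + 1) - 2 = 2 * m from by omega, coeff_cat_mul_cat_even]
      rw [catalan_succ']
      rw [Finset.Nat.sum_antidiagonal_eq_sum_range_succ_mk]
      push_cast
      ring
  · rw [coeff_cat_odd hodd, if_neg (by rcases hodd with ⟨c,hc⟩; omega)]
    rcases Nat.lt_or_ge n 2 with h | h
    · rw [if_neg (by omega)]; ring
    · rw [if_pos h, coeff_cat_mul_cat_odd (by rcases hodd with ⟨c, hc⟩; exact ⟨c - 1, by omega⟩)]
      ring

lemma cat_inv : cat⁻¹ = 1 - X ^ 2 * cat := by
  rw [eq_comm, PowerSeries.eq_inv_iff_mul_eq_one (by rw [constantCoeff_cat]; norm_num)]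
  linear_combination cat_eq

lemma cat_mul_inv : cat * cat⁻¹ = 1 :=
  PowerSeries.mul_inv_cancel _ (by rw [constantCoeff_cat]; norm_num)

lemma constantCoeff_one_add_X : constantCoeff (1 + X : ℝ⟦X⟧) = 1 := by simp

lemma huv : (1 + X : ℝ⟦X⟧) * (1 + X)⁻¹ = 1 :=
  PowerSeries.mul_inv_cancel _ (by rw [constantCoeff_one_add_X]; norm_num)

lemma coeff_onepX_pow (N k : ℕ) : coeff k ((1 + X) ^ N) = (N.choose k : ℝ) := by
  have h := Polynomial.coeff_one_add_X_pow ℝ N k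
  rw [← h, ← Polynomial.coeff_coe]
  simp

lemma coeff_X_sq_mul (k : ℕ) (f : ℝ⟦X⟧) : coeff (k + 2) (X ^ 2 * f) = coeff k f :=
  PowerSeries.coeff_X_pow_mul f 2 k

lemma main : ∀ m s r : ℕ,
    coeff (2 * m) (cat ^ s * (cat⁻¹) ^ r) =
      coeff m ((1 + X) ^ (2 * m + s) * ((1 + X)⁻¹) ^ (r + 1) * (1 - X)) := by
  intro m
  induction m using Nat.strong_induction_on with
  | _ m ih =>
    match m with
    | 0 =>
      intro s r
      simp [constantCoeff_cat, PowerSeries.constantCoeff_inv, constantCoeff_one_add_X]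
    | m + 1 =>
      intro s
      induction s with
      | zero =>
        intro r
        induction r with
        | zero =>
          rw [pow_zero, pow_zero, one_mul, PowerSeries.coeff_one, if_neg (by omega)]
          symm
          have h1 : (1 + X : ℝ⟦X⟧) ^ (2 * (m + 1) + 0) * ((1 + X)⁻¹) ^ (0 + 1) * (1 - X)
              = (1 + X) ^ (2 * m + 1) - X * (1 + X) ^ (2 * m + 1) := by
            linear_combination ((1 + X : ℝ⟦X⟧) ^ (2 * m + 1) * (1 - X)) * huv
          rw [h1, map_sub, coeff_onepX_pow, PowerSeries.coeff_succ_X_mul, coeff_onepX_pow]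
          have hch := Nat.choose_symm (show m + 1 ≤ 2 * m + 1 from by omega)
          rw [show 2 * m + 1 - (m + 1) = m from by omega] at hch
          rw [hch, sub_self]
        | succ r ihr =>
          have hA : (cat ^ 0 * (cat⁻¹) ^ (r + 1) : ℝ⟦X⟧)
              = cat ^ 0 * (cat⁻¹) ^ r - X ^ 2 * (cat ^ 1 * (cat⁻¹) ^ r) := by
            rw [pow_succ, cat_inv]; ring
          rw [hA, map_sub, show 2 * (m + 1) = 2 * m + 2 from by ring, coeff_X_sq_mul,
            show 2 * m + 2 = 2 * (m + 1) from by ring]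
          rw [ihr, ih m (by omega) 1 r]
          rw [show (coeff m) ((1 + X : ℝ⟦X⟧) ^ (2 * m + 1) * ((1 + X)⁻¹) ^ (r + 1) * (1 - X))
              = coeff (m + 1) (X * ((1 + X) ^ (2 * m + 1) * ((1 + X)⁻¹) ^ (r + 1) * (1 - X)))
              from (PowerSeries.coeff_succ_X_mul _ _).symm]
          rw [← map_sub]
          congr 1
          linear_combination (-((1 + X : ℝ⟦X⟧) ^ (2 * m + 1) * ((1 + X)⁻¹) ^ (r + 1) * (1 - X))) * huv
      | succ s ihs =>
        intro r
        have hA : (cat ^ (s + 1) * (cat⁻¹) ^ r : ℝ⟦X⟧)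
            = cat ^ s * (cat⁻¹) ^ r + X ^ 2 * (cat ^ (s + 2) * (cat⁻¹) ^ r) := by
          linear_combination (cat ^ s * (cat⁻¹) ^ r) * cat_eq
        rw [hA, map_add, show 2 * (m + 1) = 2 * m + 2 from by ring, coeff_X_sq_mul,
          show 2 * m + 2 = 2 * (m + 1) from by ring]
        rw [ihs r, ih m (by omega) (s + 2) r]
        rw [show (coeff m) ((1 + X : ℝ⟦X⟧) ^ (2 * m + (s + 2)) * ((1 + X)⁻¹) ^ (r + 1) * (1 - X))
            = coeff (m + 1) (X * ((1 + X) ^ (2 * m + (s + 2)) * ((1 + X)⁻¹) ^ (r + 1) * (1 - X)))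
            from (PowerSeries.coeff_succ_X_mul _ _).symm]
        rw [← map_add]
        congr 1
        ring

lemma main2 (m s r t : ℕ) (x y : ℝ) :
    coeff (2 * m) (cat ^ s * (cat⁻¹) ^ r * (C x * cat + C y) ^ t) =
      coeff m ((1 + X) ^ (2 * m + s) * ((1 + X)⁻¹) ^ (r + 1)
        * (C x * (1 + X) + C y) ^ t * (1 - X)) := by
  rw [add_pow (C x * cat) (C y) t, add_pow (C x * (1 + X)) (C y) t, Finset.mul_sum]
  rw [show ((1 + X : ℝ⟦X⟧) ^ (2 * m + s) * ((1 + X)⁻¹) ^ (r + 1)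
      * (∑ k ∈ range (t + 1), (C x * (1 + X)) ^ k * (C y) ^ (t - k) * ((t.choose k : ℕ) : ℝ⟦X⟧)) * (1 - X))
      = ∑ k ∈ range (t + 1), (1 + X) ^ (2 * m + s) * ((1 + X)⁻¹) ^ (r + 1)
        * ((C x * (1 + X)) ^ k * (C y) ^ (t - k) * ((t.choose k : ℕ) : ℝ⟦X⟧)) * (1 - X)
      from by rw [Finset.mul_sum, Finset.sum_mul]]
  rw [map_sum, map_sum]
  apply Finset.sum_congr rfl
  intro j hj
  have h1 : (cat ^ s * (cat⁻¹) ^ r * ((C x * cat) ^ j * (C y) ^ (t - j) * ((t.choose j : ℕ) : ℝ⟦X⟧)) : ℝ⟦X⟧)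
      = C (x ^ j * y ^ (t - j) * ((t.choose j : ℕ) : ℝ)) * (cat ^ (s + j) * (cat⁻¹) ^ r) := by
    rw [map_mul, map_mul, map_pow, map_pow, map_natCast, pow_add]
    ring
  have h2 : ((1 + X : ℝ⟦X⟧) ^ (2 * m + s) * ((1 + X)⁻¹) ^ (r + 1)
        * ((C x * (1 + X)) ^ j * (C y) ^ (t - j) * ((t.choose j : ℕ) : ℝ⟦X⟧)) * (1 - X))
      = C (x ^ j * y ^ (t - j) * ((t.choose j : ℕ) : ℝ))
        * ((1 + X) ^ (2 * m + (s + j)) * ((1 + X)⁻¹) ^ (r + 1) * (1 - X)) := by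
    rw [mul_pow, map_mul, map_mul, map_pow, map_pow, map_natCast, show 2 * m + (s + j) = (2 * m + s) + j from by ring, pow_add]
    ring
  rw [h1, h2, PowerSeries.coeff_C_mul, PowerSeries.coeff_C_mul, main]

end Stmt10

open Stmt10 in
/-- the Lagrange-inversion coefficient extraction
[tⁿ] (tC)ᵖ (a + bz)^q = [u^{(n-p)/2}] (u+1)^{n-q-1} ((a-b)u + (a+b))^q (1-u),
where C = C(t²) is the Catalan generating function in t² and z = 2/C - 1.
The factor (u+1)^{n-q-1} is written as (u+1)^{n-1}((u+1)⁻¹)^q. -/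
theorem stmt10 (n p q : ℕ) (hn : 1 ≤ n) (hpn : p ≤ n) (hpar : Even (n - p)) (a b : ℝ) :
    let Cat : PowerSeries ℝ :=
      PowerSeries.mk fun m => if Even m then (catalan (m / 2) : ℝ) else 0
    let z : PowerSeries ℝ := 2 * Cat⁻¹ - 1
    PowerSeries.coeff n ((X * Cat) ^ p * (PowerSeries.C a + PowerSeries.C b * z) ^ q) =
      PowerSeries.coeff ((n - p) / 2)
        ((1 + X) ^ (n - 1) * ((1 + X)⁻¹) ^ q *
          (PowerSeries.C (a - b) * X + PowerSeries.C (a + b)) ^ q * (1 - X)) := by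
  have hcat : cat = PowerSeries.mk fun m => if Even m then (catalan (m / 2) : ℝ) else 0 := rfl
  intro Cat z
  show coeff n ((X * Cat) ^ p * (C a + C b * (2 * Cat⁻¹ - 1)) ^ q) = _
  rw [show Cat = cat from hcat.symm]
  obtain ⟨m, hm⟩ := hpar
  have hnm : n = p + 2 * m := by omega
  have hdiv : (n - p) / 2 = m := by omega
  rw [hdiv]
  subst hnm
  have hz : C a + C b * (2 * cat⁻¹ - 1) = (C (a - b) * cat + C (2 * b)) * cat⁻¹ := by
    rw [map_sub, show (2 : ℝ) * b = b + b from by ring, map_add]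
    linear_combination (C b - C a) * cat_mul_inv
  have hL : (X * cat) ^ p * (C a + C b * (2 * cat⁻¹ - 1)) ^ q
      = X ^ p * (cat ^ p * (cat⁻¹) ^ q * (C (a - b) * cat + C (2 * b)) ^ q) := by
    rw [hz, mul_pow, mul_pow]
    ring
  rw [hL, show p + 2 * m = 2 * m + p from by ring, PowerSeries.coeff_X_pow_mul, main2]
  congr 1
  have h1 : C (a - b) * X + C (a + b) = C (a - b) * (1 + X) + C (2 * b) := by
    rw [map_add, map_sub, show (2 : ℝ) * b = b + b from by ring, map_add]
    ring
  rw [h1]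
  have h3 : 2 * m + p = (p + 2 * m - 1) + 1 := by omega
  rw [h3]
  generalize p + 2 * m - 1 = k
  have h4 : (1 + X : ℝ⟦X⟧) ^ (k + 1) * ((1 + X)⁻¹) ^ (q + 1) = (1 + X) ^ k * ((1 + X)⁻¹) ^ q := by
    rw [pow_succ, pow_succ, mul_mul_mul_comm, huv, mul_one]
  calc (1 + X : ℝ⟦X⟧) ^ (k + 1) * ((1 + X)⁻¹) ^ (q + 1)
        * (C (a - b) * (1 + X) + C (2 * b)) ^ q * (1 - X)
      = ((1 + X) ^ (k + 1) * ((1 + X)⁻¹) ^ (q + 1))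
        * ((C (a - b) * (1 + X) + C (2 * b)) ^ q * (1 - X)) := by ring
    _ = ((1 + X) ^ k * ((1 + X)⁻¹) ^ q)
        * ((C (a - b) * (1 + X) + C (2 * b)) ^ q * (1 - X)) := by rw [h4]
    _ = (1 + X) ^ k * ((1 + X)⁻¹) ^ q
        * (C (a - b) * (1 + X) + C (2 * b)) ^ q * (1 - X) := by ring

end
end

section
/- For N ≥ 2 and 0 ≤ w < 1, define S(N,w) = Σ_{p=0}^{⌊1/(1−w)⌋} C(N,p)·(1 − N(1−w))·(1 − p(1−w))^{N−p−1}·(1 − (N−p)(1−w))^{p−1}. Then 0 ≤ S(N,w) ≤ 1 for all such N and w with w < 1 − 2/N, since S(N,w) = 1 − P_c(N−1; N, w) is the probability that N uniform random arcs of length 1−w on a unit circle cover every point of the circle at least twice. -/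
open Finset

lemma alt_sum_pow : ∀ (n : ℕ), ∀ (j : ℕ), j < n →
    ∑ p ∈ Finset.range (n+1), (-1:ℝ)^p * (n.choose p) * (p:ℝ)^j = 0 := by
  intro n
  induction n using Nat.strong_induction_on with
  | _ n IH =>
    intro j hj
    rcases Nat.eq_zero_or_pos j with rfl | hj1
    · have h : (∑ m ∈ range (n+1), ((-1)^m * (n.choose m) : ℤ)) = 0 := by
        rw [Int.alternating_sum_range_choose, if_neg (by omega)]
      have h' : ((∑ m ∈ range (n+1), ((-1)^m * (n.choose m) : ℤ) : ℤ) : ℝ) = 0 := by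
        rw [h]; norm_num
      push_cast at h'
      simpa [pow_zero, mul_one] using h'
    · obtain ⟨m, rfl⟩ : ∃ m, n = m + 1 := ⟨n - 1, by omega⟩
      rw [Finset.sum_range_succ']
      have h0 : (-1:ℝ)^0 * ((m+1).choose 0) * ((0:ℕ):ℝ)^j = 0 := by
        simp [zero_pow (by omega : j ≠ 0)]
      rw [h0, add_zero]
      have hterm : ∀ p ∈ range (m+1), (-1:ℝ)^(p+1) * ((m+1).choose (p+1)) * ((p+1:ℕ):ℝ)^j
          = -((m+1:ℝ)) * ((-1:ℝ)^p * (m.choose p) * (((p:ℝ)+1))^(j-1)) := by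
        intro p _
        have hc : (m+1) * m.choose p = (m+1).choose (p+1) * (p+1) := by
          simpa using Nat.add_one_mul_choose_eq m p
        have hc' : ((m+1:ℕ):ℝ) * (m.choose p : ℝ) = ((m+1).choose (p+1) : ℝ) * ((p+1:ℕ):ℝ) := by
          exact_mod_cast congrArg (Nat.cast : ℕ → ℝ) hc
        have hjsplit : ((p+1:ℕ):ℝ)^j = ((p+1:ℕ):ℝ) * ((p+1:ℕ):ℝ)^(j-1) := by
          rw [← pow_succ']
          congr 1
          omega
        rw [hjsplit]
        push_cast at hc' ⊢
        linear_combination ((-1:ℝ)^p * ((p:ℝ)+1)^(j-1)) * hc'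
      rw [Finset.sum_congr rfl hterm, ← Finset.mul_sum]
      have hswap : ∀ p ∈ range (m+1), (-1:ℝ)^p * (m.choose p) * (((p:ℝ)+1))^(j-1)
          = ∑ i ∈ range j, ((j-1).choose i : ℝ) * ((-1:ℝ)^p * (m.choose p) * (p:ℝ)^i) := by
        intro p _
        have hb : (((p:ℝ)+1))^(j-1) = ∑ i ∈ range ((j-1)+1), (p:ℝ)^i * 1^((j-1)-i) * ((j-1).choose i) := by
          exact add_pow (p:ℝ) 1 (j-1)
        have hj1' : (j-1)+1 = j := by omega
        rw [hb, hj1', Finset.mul_sum]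
        apply Finset.sum_congr rfl
        intro i _
        ring
      rw [Finset.sum_congr rfl hswap, Finset.sum_comm]
      have hz : ∀ i ∈ range j, ∑ p ∈ range (m+1), ((j-1).choose i : ℝ) * ((-1:ℝ)^p * (m.choose p) * (p:ℝ)^i) = 0 := by
        intro i hi
        rw [← Finset.mul_sum]
        have : ∑ p ∈ range (m+1), (-1:ℝ)^p * (m.choose p) * (p:ℝ)^i = 0 := by
          apply IH m (by omega) i
          have := Finset.mem_range.mp hi
          omega
        rw [this, mul_zero]
      rw [Finset.sum_congr rfl hz, Finset.sum_const_zero, mul_zero]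


noncomputable def Tm (N p : ℕ) (a : ℝ) : ℝ :=
  (N.choose p : ℝ) * (1 - N*a) * (1 - p*a)^(N-p-1) * (1 - ((N:ℝ) - p)*a)^(p-1)

noncomputable def Vm : ℕ → ℕ → ℝ → ℝ
  | _, 0, _ => 0
  | N, 1, a => (1-a)^(N-3)
  | N, (q+2), a => ((N-2).choose (q+1) : ℝ) * (1 - ((N:ℝ)-1)*a) *
      (1 - ((q+2:ℕ):ℝ)*a)^(N-q-4) * (1 - ((N:ℝ)-((q+2:ℕ):ℝ))*a)^q

noncomputable def gm (N k : ℕ) (a : ℝ) : ℝ := 1 + ∑ i ∈ Finset.range k, Tm N (i+1) a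

lemma choose_id (m d : ℕ) :
    (m+d+4).choose (m+2) * ((m+2)*(d+2)) = (m+d+4)*(m+d+3)*((m+d+2).choose (m+1)) := by
  have h1 : (m+d+4) * ((m+d+3).choose (m+1)) = (m+d+4).choose (m+2) * (m+2) := by
    simpa using Nat.add_one_mul_choose_eq (m+d+3) (m+1)
  have h2 : (m+d+3) * ((m+d+2).choose (d+1)) = (m+d+3).choose (d+2) * (d+2) := by
    simpa using Nat.add_one_mul_choose_eq (m+d+2) (d+1)
  have h3 : (m+d+3).choose (d+2) = (m+d+3).choose (m+1) := by
    rw [← Nat.choose_symm (by omega : d+2 ≤ m+d+3)]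
    congr 1
    omega
  have h4 : (m+d+2).choose (d+1) = (m+d+2).choose (m+1) := by
    rw [← Nat.choose_symm (by omega : d+1 ≤ m+d+2)]
    congr 1
    omega
  calc (m+d+4).choose (m+2) * ((m+2)*(d+2)) = ((m+d+4).choose (m+2) * (m+2)) * (d+2) := by ring
    _ = ((m+d+4) * ((m+d+3).choose (m+1))) * (d+2) := by rw [h1]
    _ = (m+d+4) * ((m+d+3).choose (d+2) * (d+2)) := by rw [h3]; ring
    _ = (m+d+4) * ((m+d+3) * ((m+d+2).choose (d+1))) := by rw [h2]
    _ = (m+d+4)*(m+d+3)*((m+d+2).choose (m+1)) := by rw [h4]; ring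

lemma hasDerivAt_lin (c : ℝ) (a : ℝ) : HasDerivAt (fun t : ℝ => 1 - c*t) (-c) a := by
  simpa using ((hasDerivAt_id a).const_mul c).const_sub 1

lemma hasDerivAt_T1 (d : ℕ) (a : ℝ) :
    HasDerivAt (fun t => Tm (d+3) 1 t)
      (((d+3:ℕ):ℝ)*((d+2:ℕ):ℝ)*(((d+3:ℕ):ℝ)*a-2)*(1-a)^d) a := by
  have hfun : (fun t => Tm (d+3) 1 t)
      = (fun t : ℝ => (((d+3).choose 1 : ℕ):ℝ) * (1 - ((d+3:ℕ):ℝ)*t) * (1 - 1*t)^(d+1)) := by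
    funext t
    have e1 : d+3-1-1 = d+1 := by omega
    simp only [Tm, e1]
    push_cast
    ring
  rw [hfun]
  have h1 : HasDerivAt (fun t : ℝ => (((d+3).choose 1 : ℕ):ℝ) * (1 - ((d+3:ℕ):ℝ)*t))
      ((((d+3).choose 1 : ℕ):ℝ) * (-((d+3:ℕ):ℝ))) a :=
    (hasDerivAt_lin ((d+3:ℕ):ℝ) a).const_mul _
  have h2 : HasDerivAt (fun t : ℝ => (1 - 1*t)^(d+1))
      (((d+1:ℕ):ℝ) * (1 - 1*a)^(d+1-1) * (-1)) a := (hasDerivAt_lin 1 a).pow (d+1)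
  have := h1.mul h2
  refine this.congr_deriv ?_
  symm
  have e2 : d+1-1 = d := by omega
  rw [e2]
  have hch : ((d+3).choose 1 : ℝ) = ((d+3:ℕ):ℝ) := by
    norm_cast
    simp [Nat.choose_one_right]
  rw [hch]
  push_cast
  ring

lemma hasDerivAt_T2 (m d : ℕ) (a : ℝ) :
    HasDerivAt (fun t => Tm (m+d+4) (m+2) t)
      (((m+d+4:ℕ):ℝ)*((m+d+3:ℕ):ℝ)*(((m+d+4:ℕ):ℝ)*a-2) *
        (((m+d+2).choose (m+1) : ℝ) * (1 - ((m+d+3:ℕ):ℝ)*a) *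
          (1 - ((m+2:ℕ):ℝ)*a)^d * (1 - ((d+2:ℕ):ℝ)*a)^m)) a := by
  have hfun : (fun t => Tm (m+d+4) (m+2) t)
      = (fun t : ℝ => (((m+d+4).choose (m+2) : ℕ):ℝ) * (1 - ((m+d+4:ℕ):ℝ)*t) *
          (1 - ((m+2:ℕ):ℝ)*t)^(d+1) * (1 - ((d+2:ℕ):ℝ)*t)^(m+1)) := by
    funext t
    have e1 : m+d+4-(m+2)-1 = d+1 := by omega
    have e2 : m+2-1 = m+1 := by omega
    have e3 : ((m+d+4:ℕ):ℝ) - ((m+2:ℕ):ℝ) = ((d+2:ℕ):ℝ) := by push_cast; ring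
    simp only [Tm, e1, e2, e3]
  rw [hfun]
  have h1 : HasDerivAt (fun t : ℝ => (((m+d+4).choose (m+2) : ℕ):ℝ) * (1 - ((m+d+4:ℕ):ℝ)*t))
      ((((m+d+4).choose (m+2) : ℕ):ℝ) * (-((m+d+4:ℕ):ℝ))) a :=
    (hasDerivAt_lin _ a).const_mul _
  have h2 : HasDerivAt (fun t : ℝ => (1 - ((m+2:ℕ):ℝ)*t)^(d+1))
      (((d+1:ℕ):ℝ) * (1 - ((m+2:ℕ):ℝ)*a)^(d+1-1) * (-((m+2:ℕ):ℝ))) a :=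
    (hasDerivAt_lin _ a).pow (d+1)
  have h3 : HasDerivAt (fun t : ℝ => (1 - ((d+2:ℕ):ℝ)*t)^(m+1))
      (((m+1:ℕ):ℝ) * (1 - ((d+2:ℕ):ℝ)*a)^(m+1-1) * (-((d+2:ℕ):ℝ))) a :=
    (hasDerivAt_lin _ a).pow (m+1)
  have htot := (h1.mul h2).mul h3
  refine htot.congr_deriv ?_
  symm
  have e4 : d+1-1 = d := by omega
  have e5 : m+1-1 = m := by omega
  rw [e4, e5]
  simp only [Pi.mul_apply]
  have hch : (((m+d+4).choose (m+2) : ℕ):ℝ) * (((m+2:ℕ):ℝ)*((d+2:ℕ):ℝ))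
      = ((m+d+4:ℕ):ℝ)*((m+d+3:ℕ):ℝ)*(((m+d+2).choose (m+1) : ℕ):ℝ) := by
    exact_mod_cast congrArg (Nat.cast : ℕ → ℝ) (choose_id m d)
  push_cast at hch ⊢
  linear_combination (-((1 - ((m:ℝ)+2)*a)^d * (1 - ((d:ℝ)+2)*a)^m * (((m:ℝ)+(d:ℝ)+4)*a-2) * (1-((m:ℝ)+(d:ℝ)+3)*a))) * hch

lemma hasDerivAt_T (N p : ℕ) (hp : 1 ≤ p) (hpN : p + 2 ≤ N) (a : ℝ) :
    HasDerivAt (fun t => Tm N p t) ((N:ℝ)*((N:ℝ)-1)*((N:ℝ)*a-2) * Vm N p a) a := by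
  rcases Nat.lt_or_ge p 2 with hp2 | hp2
  · -- p = 1
    have hp1 : p = 1 := by omega
    subst hp1
    obtain ⟨d, rfl⟩ : ∃ d, N = d + 3 := ⟨N - 3, by omega⟩
    have := hasDerivAt_T1 d a
    convert this using 1
    show ((d+3:ℕ):ℝ)*(((d+3:ℕ):ℝ)-1)*(((d+3:ℕ):ℝ)*a-2) * Vm (d+3) 1 a = _
    have : Vm (d+3) 1 a = (1-a)^d := by
      show (1-a)^(d+3-3) = (1-a)^d
      norm_num
    rw [this]
    push_cast
    ring
  · -- p ≥ 2
    obtain ⟨m, rfl⟩ : ∃ m, p = m + 2 := ⟨p - 2, by omega⟩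
    obtain ⟨d, rfl⟩ : ∃ d, N = m + d + 4 := ⟨N - m - 4, by omega⟩
    have := hasDerivAt_T2 m d a
    convert this using 1
    show ((m+d+4:ℕ):ℝ)*(((m+d+4:ℕ):ℝ)-1)*(((m+d+4:ℕ):ℝ)*a-2) * Vm (m+d+4) (m+2) a = _
    have hV : Vm (m+d+4) (m+2) a = ((m+d+2).choose (m+1) : ℝ) * (1 - ((m+d+3:ℕ):ℝ)*a) *
        (1 - ((m+2:ℕ):ℝ)*a)^d * (1 - ((d+2:ℕ):ℝ)*a)^m := by
      show ((m+d+4-2).choose (m+1) : ℝ) * (1 - (((m+d+4:ℕ):ℝ)-1)*a) *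
          (1 - ((m+2:ℕ):ℝ)*a)^(m+d+4-m-4) * (1 - (((m+d+4:ℕ):ℝ)-((m+2:ℕ):ℝ))*a)^m = _
      have e1 : m+d+4-2 = m+d+2 := by omega
      have e2 : m+d+4-m-4 = d := by omega
      rw [e1, e2]
      have e3 : ((m+d+4:ℕ):ℝ)-1 = ((m+d+3:ℕ):ℝ) := by push_cast; ring
      have e4 : ((m+d+4:ℕ):ℝ)-((m+2:ℕ):ℝ) = ((d+2:ℕ):ℝ) := by push_cast; ring
      rw [e3, e4]
    rw [hV]
    push_cast
    ring

lemma hasDerivAt_g (N k : ℕ) (hk : k + 2 ≤ N) (a : ℝ) :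
    HasDerivAt (gm N k) ((N:ℝ)*((N:ℝ)-1)*((N:ℝ)*a-2) * ∑ i ∈ Finset.range k, Vm N (i+1) a) a := by
  have hsum : HasDerivAt (fun t => ∑ i ∈ Finset.range k, Tm N (i+1) t)
      (∑ i ∈ Finset.range k, (N:ℝ)*((N:ℝ)-1)*((N:ℝ)*a-2) * Vm N (i+1) a) a := by
    apply HasDerivAt.fun_sum
    intro i hi
    have hi' := Finset.mem_range.mp hi
    exact hasDerivAt_T N (i+1) (by omega) (by omega) a
  have h1 : HasDerivAt (gm N k)
      (0 + ∑ i ∈ Finset.range k, (N:ℝ)*((N:ℝ)-1)*((N:ℝ)*a-2) * Vm N (i+1) a) a := by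
    exact (hasDerivAt_const a (1:ℝ)).add hsum
  rw [zero_add] at h1
  rwa [Finset.mul_sum]

lemma Vm_eq2 (m d : ℕ) (a : ℝ) : Vm (m+d+4) (m+2) a = ((m+d+2).choose (m+1) : ℝ) *
    (1 - ((m+d+3:ℕ):ℝ)*a) * (1 - ((m+2:ℕ):ℝ)*a)^d * (1 - ((d+2:ℕ):ℝ)*a)^m := by
  show ((m+d+4-2).choose (m+1) : ℝ) * (1 - (((m+d+4:ℕ):ℝ)-1)*a) *
      (1 - ((m+2:ℕ):ℝ)*a)^(m+d+4-m-4) * (1 - (((m+d+4:ℕ):ℝ)-((m+2:ℕ):ℝ))*a)^m = _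
  have e1 : m+d+4-2 = m+d+2 := by omega
  have e2 : m+d+4-m-4 = d := by omega
  rw [e1, e2]
  have e3 : ((m+d+4:ℕ):ℝ)-1 = ((m+d+3:ℕ):ℝ) := by push_cast; ring
  have e4 : ((m+d+4:ℕ):ℝ)-((m+2:ℕ):ℝ) = ((d+2:ℕ):ℝ) := by push_cast; ring
  rw [e3, e4]

lemma key_frac (c a : ℝ) (ha : a ≠ 1) : (1-a) * (1 - c*(a/(1-a))) = 1 - (c+1)*a := by
  have h : (1:ℝ) - a ≠ 0 := sub_ne_zero.mpr (Ne.symm ha)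
  field_simp
  ring

lemma V_T (m d : ℕ) (a : ℝ) (ha : a ≠ 1) :
    Vm (m+d+4) (m+2) a = (1-a)^(m+d+1) * Tm (m+d+2) (m+1) (a/(1-a)) := by
  have hT : Tm (m+d+2) (m+1) (a/(1-a)) = ((m+d+2).choose (m+1):ℝ) *
      (1 - ((m+d+2:ℕ):ℝ)*(a/(1-a))) * (1 - ((m+1:ℕ):ℝ)*(a/(1-a)))^d
        * (1 - ((d+1:ℕ):ℝ)*(a/(1-a)))^m := by
    show ((m+d+2).choose (m+1):ℝ) * (1 - ((m+d+2:ℕ):ℝ)*(a/(1-a))) *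
        (1 - ((m+1:ℕ):ℝ)*(a/(1-a)))^(m+d+2-(m+1)-1)
        * (1 - (((m+d+2:ℕ):ℝ)-((m+1:ℕ):ℝ))*(a/(1-a)))^(m+1-1) = _
    have e1 : m+d+2-(m+1)-1 = d := by omega
    have e2 : m+1-1 = m := by omega
    have e3 : ((m+d+2:ℕ):ℝ)-((m+1:ℕ):ℝ) = ((d+1:ℕ):ℝ) := by push_cast; ring
    rw [e1, e2, e3]
  rw [hT, Vm_eq2]
  have h1 := key_frac ((m+d+2:ℕ):ℝ) a ha
  have h2 := key_frac ((m+1:ℕ):ℝ) a ha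
  have h3 := key_frac ((d+1:ℕ):ℝ) a ha
  have c1 : ((m+d+2:ℕ):ℝ)+1 = ((m+d+3:ℕ):ℝ) := by push_cast; ring
  have c2 : ((m+1:ℕ):ℝ)+1 = ((m+2:ℕ):ℝ) := by push_cast; ring
  have c3 : ((d+1:ℕ):ℝ)+1 = ((d+2:ℕ):ℝ) := by push_cast; ring
  rw [c1] at h1; rw [c2] at h2; rw [c3] at h3
  calc ((m+d+2).choose (m+1) : ℝ) * (1 - ((m+d+3:ℕ):ℝ)*a) * (1 - ((m+2:ℕ):ℝ)*a)^d * (1 - ((d+2:ℕ):ℝ)*a)^m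
      = ((m+d+2).choose (m+1) : ℝ) * ((1-a) * (1 - ((m+d+2:ℕ):ℝ)*(a/(1-a)))) *
        ((1-a) * (1 - ((m+1:ℕ):ℝ)*(a/(1-a))))^d * ((1-a) * (1 - ((d+1:ℕ):ℝ)*(a/(1-a))))^m := by
        rw [h1, h2, h3]
    _ = (1-a)^(m+d+1) * (((m+d+2).choose (m+1):ℝ) * (1 - ((m+d+2:ℕ):ℝ)*(a/(1-a))) *
        (1 - ((m+1:ℕ):ℝ)*(a/(1-a)))^d * (1 - ((d+1:ℕ):ℝ)*(a/(1-a)))^m) := by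
        rw [mul_pow, mul_pow, pow_add, pow_add, pow_one]
        ring

lemma W_eq (N k : ℕ) (hk : 1 ≤ k) (hkN : 2*k < N) (a : ℝ) (ha : a ≠ 1) :
    ∑ i ∈ Finset.range k, Vm N (i+1) a = (1-a)^(N-3) * gm (N-2) (k-1) (a/(1-a)) := by
  obtain ⟨k', rfl⟩ : ∃ k', k = k'+1 := ⟨k-1, by omega⟩
  have hk'' : k'+1-1 = k' := by omega
  rw [hk'', Finset.sum_range_succ']
  have hV1 : Vm N 1 a = (1-a)^(N-3) := rfl
  rw [hV1]
  unfold gm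
  rw [mul_add, mul_one, Finset.mul_sum]
  have hterm : ∀ j ∈ Finset.range k', Vm N (j+1+1) a = (1-a)^(N-3) * Tm (N-2) (j+1) (a/(1-a)) := by
    intro j hj
    have hj' := Finset.mem_range.mp hj
    have h := V_T j (N-j-4) a ha
    have eN : j + (N-j-4) + 4 = N := by omega
    have eN2 : j + (N-j-4) + 2 = N-2 := by omega
    have eN3 : j + (N-j-4) + 1 = N-3 := by omega
    rw [eN, eN2, eN3] at h
    exact h
  rw [Finset.sum_congr rfl hterm]
  ring

lemma B_reflect (N q : ℕ) (hq : q ≤ N) (hN : 2 ≤ N) :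
    (-1:ℝ)^(N-q) * (N.choose (N-q)) * ((N:ℝ)-2*((N-q:ℕ):ℝ))^(N-2)
      = (-1:ℝ)^q * (N.choose q) * ((N:ℝ)-2*(q:ℝ))^(N-2) := by
  have hc : N.choose (N-q) = N.choose q := Nat.choose_symm hq
  rw [hc]
  have hcast : ((N-q:ℕ):ℝ) = (N:ℝ) - q := by
    rw [Nat.cast_sub hq]
  rw [hcast]
  have hbase : (N:ℝ) - 2*((N:ℝ)-(q:ℝ)) = -((N:ℝ)-2*(q:ℝ)) := by ring
  rw [hbase, neg_pow ((N:ℝ)-2*(q:ℝ)) (N-2)]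
  have hsign : (-1:ℝ)^(N-q) * (-1:ℝ)^(N-2) = (-1:ℝ)^q := by
    have h1 : (-1:ℝ)^(q + ((N-q)+(N-2))) = 1 := by
      rw [show q + ((N-q)+(N-2)) = 2*(N-1) by omega, pow_mul]
      norm_num
    have h2 : (-1:ℝ)^(q+q) = 1 := by
      rw [show q+q = 2*q by ring, pow_mul]
      norm_num
    have h3 : ((-1:ℝ)^q) * ((-1:ℝ)^(N-q) * (-1:ℝ)^(N-2)) = ((-1:ℝ)^q) * (-1:ℝ)^q := by
      rw [← pow_add (-1:ℝ) (N-q) (N-2), ← pow_add (-1:ℝ) q ((N-q)+(N-2)), ← pow_add (-1:ℝ) q q, h1, h2]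
    exact mul_left_cancel₀ (pow_ne_zero _ (by norm_num)) h3
  calc (-1:ℝ)^(N-q) * (N.choose q) * ((-1:ℝ)^(N-2) * ((N:ℝ)-2*(q:ℝ))^(N-2))
      = ((-1:ℝ)^(N-q) * (-1:ℝ)^(N-2)) * ((N.choose q : ℝ) * ((N:ℝ)-2*(q:ℝ))^(N-2)) := by ring
    _ = (-1:ℝ)^q * (N.choose q) * ((N:ℝ)-2*(q:ℝ))^(N-2) := by rw [hsign]; ring

lemma g_end (N k : ℕ) (hk : 1 ≤ k) (h1 : 2*k < N) (h2 : N ≤ 2*k+2) :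
    gm N k (2/(N:ℝ)) = 0 := by
  have hN3 : 3 ≤ N := by omega
  have hN0 : (0:ℝ) < (N:ℝ) := by exact_mod_cast (by omega : 0 < N)
  have hNR : (N:ℝ) ≠ 0 := ne_of_gt hN0
  set B : ℕ → ℝ := fun p => (-1:ℝ)^p * (N.choose p) * ((N:ℝ)-2*(p:ℝ))^(N-2) with hB
  -- terms at a = 2/N
  have hterm : ∀ p, 1 ≤ p → p ≤ k → Tm N p (2/(N:ℝ)) = B p / (N:ℝ)^(N-2) := by
    intro p hp1 hpk
    have e1 : 1 - (N:ℝ)*(2/(N:ℝ)) = -1 := by field_simp; norm_num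
    have e2 : 1 - (p:ℝ)*(2/(N:ℝ)) = ((N:ℝ)-2*(p:ℝ))/(N:ℝ) := by field_simp
    have e3 : 1 - ((N:ℝ)-(p:ℝ))*(2/(N:ℝ)) = -(((N:ℝ)-2*(p:ℝ))/(N:ℝ)) := by
      field_simp; ring
    have hT : Tm N p (2/(N:ℝ)) = (N.choose p : ℝ) * (-1) *
        (((N:ℝ)-2*(p:ℝ))/(N:ℝ))^(N-p-1) * (-(((N:ℝ)-2*(p:ℝ))/(N:ℝ)))^(p-1) := by
      unfold Tm
      rw [e1, e2, e3]
    rw [hT, neg_pow]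
    have epow : (((N:ℝ)-2*(p:ℝ))/(N:ℝ))^(N-p-1) * (((N:ℝ)-2*(p:ℝ))/(N:ℝ))^(p-1)
        = (((N:ℝ)-2*(p:ℝ))/(N:ℝ))^(N-2) := by
      rw [← pow_add]
      congr 1
      omega
    have esign : (-1:ℝ)^p = (-1:ℝ)^(p-1) * (-1) := by
      conv_lhs => rw [show p = (p-1)+1 by omega]
      rw [pow_succ]
    have ediv : (((N:ℝ)-2*(p:ℝ))/(N:ℝ))^(N-2) = ((N:ℝ)-2*(p:ℝ))^(N-2) / (N:ℝ)^(N-2) :=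
      div_pow _ _ _
    calc (N.choose p : ℝ) * (-1) * (((N:ℝ)-2*(p:ℝ))/(N:ℝ))^(N-p-1) *
          ((-1:ℝ)^(p-1) * (((N:ℝ)-2*(p:ℝ))/(N:ℝ))^(p-1))
        = ((-1:ℝ)^(p-1) * (-1)) * (N.choose p : ℝ) *
          ((((N:ℝ)-2*(p:ℝ))/(N:ℝ))^(N-p-1) * (((N:ℝ)-2*(p:ℝ))/(N:ℝ))^(p-1)) := by ring
      _ = (-1:ℝ)^p * (N.choose p : ℝ) * (((N:ℝ)-2*(p:ℝ))/(N:ℝ))^(N-2) := by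
          rw [epow, ← esign]
      _ = B p / (N:ℝ)^(N-2) := by
          rw [hB, ediv]
          ring
  -- gm as a single sum
  have hgm : gm N k (2/(N:ℝ)) = (∑ p ∈ range (k+1), B p) / (N:ℝ)^(N-2) := by
    unfold gm
    rw [Finset.sum_range_succ' B k]
    have hB0 : B 0 = (N:ℝ)^(N-2) := by
      simp [hB]
    rw [add_div, Finset.sum_div, hB0, div_self (by positivity)]
    rw [add_comm]
    congr 1
    apply Finset.sum_congr rfl
    intro i hi
    have hi' := Finset.mem_range.mp hi
    rw [hterm (i+1) (by omega) (by omega)]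
  -- the alternating sum vanishes
  have hfull : ∑ p ∈ range (N+1), B p = 0 := by
    have hexp : ∀ p : ℕ, B p = ∑ i ∈ range (N-2+1),
        ((N:ℝ)^i * (-2:ℝ)^(N-2-i) * ((N-2).choose i : ℝ)) * ((-1:ℝ)^p * (N.choose p : ℝ) * (p:ℝ)^(N-2-i)) := by
      intro p
      have hpow : ((N:ℝ)-2*(p:ℝ))^(N-2) = ((N:ℝ) + (-(2*(p:ℝ))))^(N-2) := by ring_nf
      have hadd := add_pow (N:ℝ) (-(2*(p:ℝ))) (N-2)
      rw [hB]
      simp only [hpow, hadd, Finset.mul_sum, Finset.sum_mul]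
      apply Finset.sum_congr rfl
      intro i _
      have : (-(2*(p:ℝ)))^(N-2-i) = (-2:ℝ)^(N-2-i) * (p:ℝ)^(N-2-i) := by
        rw [show -(2*(p:ℝ)) = (-2:ℝ)*(p:ℝ) by ring, mul_pow]
      rw [this]
      ring
    rw [Finset.sum_congr rfl (fun p _ => hexp p), Finset.sum_comm]
    apply Finset.sum_eq_zero
    intro i hi
    rw [← Finset.mul_sum]
    have hz : ∑ p ∈ range (N+1), ((-1:ℝ)^p * (N.choose p : ℝ) * (p:ℝ)^(N-2-i)) = 0 :=
      alt_sum_pow N (N-2-i) (by omega)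
    rw [hz, mul_zero]
  -- split and reflect
  have hsplit : ∑ p ∈ range (N+1), B p
      = ∑ p ∈ range (k+1), B p + ∑ p ∈ Ico (k+1) (N+1), B p := by
    simp only [Finset.range_eq_Ico]
    exact (Finset.sum_Ico_consecutive B (Nat.zero_le _) (by omega)).symm
  have hrefl : ∑ p ∈ Ico (k+1) (N+1), B p = ∑ q ∈ range (N-k), B (N-q) := by
    apply Finset.sum_nbij' (fun p => N - p) (fun q => N - q)
    · intro a ha
      simp only [Finset.mem_Ico] at ha
      simp only [Finset.mem_range]
      omega
    · intro a ha
      simp only [Finset.mem_range] at ha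
      simp only [Finset.mem_Ico]
      omega
    · intro a ha
      simp only [Finset.mem_Ico] at ha
      omega
    · intro a ha
      simp only [Finset.mem_range] at ha
      omega
    · intro a ha
      simp only [Finset.mem_Ico] at ha
      congr 1
      omega
  have hBrefl : ∀ q ∈ range (k+1), B (N-q) = B q := by
    intro q hq
    have hq' := Finset.mem_range.mp hq
    exact B_reflect N q (by omega) (by omega)
  have hhalf : ∑ q ∈ range (N-k), B (N-q) = ∑ q ∈ range (k+1), B q := by
    rcases (by omega : N = 2*k+1 ∨ N = 2*k+2) with hN | hN
    · rw [show N-k = k+1 by omega]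
      exact Finset.sum_congr rfl hBrefl
    · rw [show N-k = k+2 by omega, Finset.sum_range_succ]
      have hmid : B (N-(k+1)) = 0 := by
        rw [hB]
        have : ((N:ℝ)-2*(((k+1):ℕ):ℝ)) = 0 := by
          subst hN
          push_cast
          ring
        simp only [show N - (k+1) = k+1 by omega]
        rw [this, zero_pow (by omega : N-2 ≠ 0), mul_zero]
      rw [hmid, add_zero]
      exact Finset.sum_congr rfl hBrefl
  have hsum0 : ∑ p ∈ range (k+1), B p = 0 := by
    have := hfull
    rw [hsplit, hrefl, hhalf] at this
    linarith
  rw [hgm, hsum0, zero_div]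

def Claim (M : ℕ) : Prop := ∀ k : ℕ, 1 ≤ k → ∀ a : ℝ, 2/(M:ℝ) < a →
  1/((k:ℝ)+1) ≤ a → a ≤ 1/(k:ℝ) → 0 ≤ gm M k a ∧ gm M k a ≤ 1

lemma T_boundary (N j : ℕ) (hN : j+3 ≤ N) : Tm N (j+1) (1/((j:ℝ)+1)) = 0 := by
  unfold Tm
  have hj0 : ((j:ℝ)+1) ≠ 0 := by positivity
  have hbase : 1 - ((j+1:ℕ):ℝ)*(1/((j:ℝ)+1)) = 0 := by
    push_cast
    field_simp
    norm_num
  rw [hbase, zero_pow (by omega : N-(j+1)-1 ≠ 0)]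
  ring

lemma gm_mono (N k : ℕ) (hN : 3 ≤ N) (hk : 1 ≤ k) (hcl : Claim (N-2))
    (c d : ℝ) (hc2 : 2/(N:ℝ) ≤ c) (hck : 1/((k:ℝ)+1) ≤ c) (hd : d ≤ 1/(k:ℝ)) :
    MonotoneOn (gm N k) (Set.Icc c d) := by
  have hN0 : (0:ℝ) < (N:ℝ) := by exact_mod_cast (by omega : 0 < N)
  have hk0 : (0:ℝ) < (k:ℝ) := by exact_mod_cast (by omega : 0 < k)
  rcases le_or_gt c d with hcd | hcd
  swap
  · rw [Set.Icc_eq_empty (not_le.mpr hcd)]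
    intro x hx
    exact absurd hx (Set.notMem_empty x)
  have hkN : 2*k ≤ N := by
    have h1 : 2/(N:ℝ) ≤ 1/(k:ℝ) := le_trans hc2 (le_trans hcd hd)
    rw [div_le_div_iff₀ hN0 hk0] at h1
    exact_mod_cast (by linarith : 2*(k:ℝ) ≤ (N:ℝ))
  have hkN2 : k + 2 ≤ N := by omega
  apply monotoneOn_of_deriv_nonneg (convex_Icc c d)
  · intro x hx
    exact (hasDerivAt_g N k hkN2 x).differentiableAt.continuousAt.continuousWithinAt
  · intro x hx
    rw [interior_Icc] at hx
    exact (hasDerivAt_g N k hkN2 x).differentiableAt.differentiableWithinAt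
  · intro x hx
    rw [interior_Icc] at hx
    obtain ⟨hx1, hx2⟩ := hx
    rw [(hasDerivAt_g N k hkN2 x).deriv]
    have hx2N : 2/(N:ℝ) < x := lt_of_le_of_lt hc2 hx1
    have hxk : x < 1/(k:ℝ) := lt_of_lt_of_le hx2 hd
    have hxk1 : 1/((k:ℝ)+1) < x := lt_of_le_of_lt hck hx1
    have hx0 : 0 < x := lt_trans (by positivity) hx2N
    have hx1' : x < 1 := lt_of_lt_of_le hxk (by
      rw [div_le_one hk0]
      exact_mod_cast (by omega : 1 ≤ k))
    have hNx : 2 < (N:ℝ)*x := by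
      rw [div_lt_iff₀ hN0] at hx2N
      linarith
    have h2kN : 2*k < N := by
      have h1 : 2/(N:ℝ) < 1/(k:ℝ) := lt_trans hx2N hxk
      rw [div_lt_div_iff₀ hN0 hk0] at h1
      exact_mod_cast (by linarith : 2*(k:ℝ) < (N:ℝ))
    have hW : 0 ≤ ∑ i ∈ Finset.range k, Vm N (i+1) x := by
      rw [W_eq N k hk h2kN x (ne_of_lt hx1')]
      apply mul_nonneg (pow_nonneg (by linarith) _)
      set y := x/(1-x) with hy
      have h1x : (0:ℝ) < 1 - x := by linarith
      have hy0 : 0 < y := div_pos hx0 h1x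
      rcases Nat.lt_or_ge (k-1) 1 with hk1 | hk1
      · have : k - 1 = 0 := by omega
        rw [this]
        unfold gm
        simp
      · have hM0 : (0:ℝ) < ((N-2:ℕ):ℝ) := by exact_mod_cast (by omega : 0 < N-2)
        have hMcast : ((N-2:ℕ):ℝ) = (N:ℝ) - 2 := by
          push_cast [Nat.cast_sub (by omega : 2 ≤ N)]
          ring
        have hk1cast : ((k-1:ℕ):ℝ) = (k:ℝ) - 1 := by
          push_cast [Nat.cast_sub (by omega : 1 ≤ k)]
          ring
        have cond1 : 2/((N-2:ℕ):ℝ) < y := by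
          rw [div_lt_div_iff₀ hM0 h1x, hMcast]
          nlinarith
        have cond2 : 1/(((k-1:ℕ):ℝ)+1) ≤ y := by
          rw [hk1cast, show (k:ℝ)-1+1 = (k:ℝ) by ring]
          rw [div_le_div_iff₀ hk0 h1x]
          have : 1 < ((k:ℝ)+1)*x := by
            rw [div_lt_iff₀ (by positivity : (0:ℝ) < (k:ℝ)+1)] at hxk1
            linarith
          nlinarith
        have cond3 : y ≤ 1/((k-1:ℕ):ℝ) := by
          have hk1R : (0:ℝ) < ((k-1:ℕ):ℝ) := by exact_mod_cast (by omega : 0 < k-1)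
          rw [div_le_div_iff₀ h1x hk1R, hk1cast]
          have : (k:ℝ)*x < 1 := by
            rw [lt_div_iff₀ hk0] at hxk
            linarith
          nlinarith
        exact (hcl (k-1) hk1 y cond1 cond2 cond3).1
    have hfac : 0 ≤ (N:ℝ)*((N:ℝ)-1)*((N:ℝ)*x-2) := by
      have h1N : (1:ℝ) ≤ (N:ℝ) := by exact_mod_cast (by omega : 1 ≤ N)
      apply mul_nonneg (mul_nonneg (by linarith) (by linarith)) (by linarith)
    exact mul_nonneg hfac hW

lemma claim_all : ∀ N, Claim N := by
  intro N
  induction N using Nat.strong_induction_on with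
  | _ N IH =>
    intro k hk a h2a hka hak
    have hk0 : (0:ℝ) < (k:ℝ) := by exact_mod_cast (by omega : 0 < k)
    have hk1le : 1/(k:ℝ) ≤ 1 := by
      rw [div_le_one hk0]
      exact_mod_cast (by omega : 1 ≤ k)
    by_cases hN3 : 3 ≤ N
    swap
    · -- N ≤ 2
      interval_cases N
      · -- N = 0
        have : ∀ i ∈ Finset.range k, Tm 0 (i+1) a = 0 := by
          intro i _
          unfold Tm
          rw [Nat.choose_eq_zero_of_lt (by omega)]
          norm_num
        unfold gm
        rw [Finset.sum_congr rfl this, Finset.sum_const_zero, add_zero]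
        norm_num
      · -- N = 1
        exfalso
        norm_num at h2a
        linarith [le_trans hak hk1le]
      · -- N = 2
        exfalso
        norm_num at h2a
        linarith [le_trans hak hk1le]
    · have hN0 : (0:ℝ) < (N:ℝ) := by exact_mod_cast (by omega : 0 < N)
      have hcl2 : Claim (N-2) := IH (N-2) (by omega)
      have h2kN : 2*k < N := by
        have h1 : 2/(N:ℝ) < 1/(k:ℝ) := lt_of_lt_of_le h2a hak
        rw [div_lt_div_iff₀ hN0 hk0] at h1
        exact_mod_cast (by linarith : 2*(k:ℝ) < (N:ℝ))
      constructor
      · -- LOWER BOUND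
        have step : ∀ j, j < N →
            (∀ b:ℝ, 2/(N:ℝ) < b → 1/(((j:ℝ)+1)+1) ≤ b → b ≤ 1/((j:ℝ)+1) → 0 ≤ gm N (j+1) b) →
            (∀ b:ℝ, 2/(N:ℝ) < b → 1/((j:ℝ)+1) ≤ b → b ≤ 1/(j:ℝ) → 0 ≤ gm N j b) := by
          intro j hjN Pj1 b hb1 hb2 hb3
          rcases Nat.eq_zero_or_pos j with rfl | hj1
          · exfalso
            norm_num at hb3
            have hpos : 0 < 2/(N:ℝ) := by positivity
            linarith
          have hj0 : (0:ℝ) < (j:ℝ) := by exact_mod_cast hj1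
          have h2jN : 2*j < N := by
            have h1 : 2/(N:ℝ) < 1/(j:ℝ) := lt_of_lt_of_le hb1 hb3
            rw [div_lt_div_iff₀ hN0 hj0] at h1
            exact_mod_cast (by linarith : 2*(j:ℝ) < (N:ℝ))
          rcases le_or_gt (1/((j:ℝ)+1)) (2/(N:ℝ)) with hcase | hcase
          · -- base piece, use g_end
            have hmono := gm_mono N j hN3 hj1 hcl2 (2/(N:ℝ)) b le_rfl hcase hb3
            have hNle : N ≤ 2*j+2 := by
              rw [div_le_div_iff₀ (by positivity : (0:ℝ) < (j:ℝ)+1) hN0] at hcase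
              exact_mod_cast (by linarith : (N:ℝ) ≤ 2*((j:ℝ)+1))
            have hend := g_end N j hj1 h2jN hNle
            have hmem1 : 2/(N:ℝ) ∈ Set.Icc (2/(N:ℝ)) b := by
              constructor <;> [exact le_rfl; linarith]
            have hmem2 : b ∈ Set.Icc (2/(N:ℝ)) b := by
              constructor <;> [linarith; exact le_rfl]
            have := hmono hmem1 hmem2 (by linarith)
            linarith [hend]
          · -- chain to piece j+1
            have h2j1N : 2*(j+1) < N := by
              rw [div_lt_div_iff₀ hN0 (by positivity : (0:ℝ) < (j:ℝ)+1)] at hcase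
              exact_mod_cast (by push_cast; linarith : 2*((j+1:ℕ):ℝ) < (N:ℝ))
            have hmono := gm_mono N j hN3 hj1 hcl2 (1/((j:ℝ)+1)) b (le_of_lt hcase) le_rfl hb3
            have hbp : 0 ≤ gm N (j+1) (1/((j:ℝ)+1)) := by
              apply Pj1 (1/((j:ℝ)+1)) hcase
              · apply div_le_div_of_nonneg_left (by norm_num) (by positivity)
                linarith
              · exact le_rfl
            have hbd : gm N (j+1) (1/((j:ℝ)+1)) = gm N j (1/((j:ℝ)+1)) := by
              unfold gm
              rw [Finset.sum_range_succ, T_boundary N j (by omega), add_zero]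
            have hmem1 : 1/((j:ℝ)+1) ∈ Set.Icc (1/((j:ℝ)+1)) b := by
              constructor <;> [exact le_rfl; exact hb2]
            have hmem2 : b ∈ Set.Icc (1/((j:ℝ)+1)) b := by
              constructor <;> [exact hb2; exact le_rfl]
            have := hmono hmem1 hmem2 hb2
            rw [hbd] at hbp
            linarith
        have key : ∀ i j, j + i = N →
            (∀ b:ℝ, 2/(N:ℝ) < b → 1/((j:ℝ)+1) ≤ b → b ≤ 1/(j:ℝ) → 0 ≤ gm N j b) := by
          intro i
          induction i with
          | zero =>
            intro j hj b hb1 hb2 hb3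
            exfalso
            have hjN : j = N := by omega
            subst hjN
            have h1 : 2/((j:ℕ):ℝ) < 1/((j:ℕ):ℝ) := lt_of_lt_of_le hb1 hb3
            have hj0' : (0:ℝ) < ((j:ℕ):ℝ) := by exact_mod_cast (by omega : 0 < j)
            rw [div_lt_div_iff₀ hj0' hj0'] at h1
            nlinarith
          | succ i ihi =>
            intro j hj
            apply step j (by omega)
            intro b hb1 hb2 hb3
            have := ihi (j+1) (by omega) b hb1
            push_cast at this ⊢
            exact this (by linarith) (by linarith)
        exact key (N-k) k (by omega) a h2a hka hak
      · -- UPPER BOUND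
        have hQ : ∀ j : ℕ, ∀ b:ℝ, 2/(N:ℝ) < b → 1/((j:ℝ)+1) ≤ b → b ≤ 1/(j:ℝ) → gm N j b ≤ 1 := by
          intro j
          induction j with
          | zero =>
            intro b hb1 hb2 hb3
            exfalso
            norm_num at hb3
            have hpos : 0 < 2/(N:ℝ) := by positivity
            linarith
          | succ j ihj =>
            intro b hb1 hb2 hb3
            have hj10 : (0:ℝ) < (j:ℝ)+1 := by positivity
            have hmono := gm_mono N (j+1) hN3 (by omega) hcl2 b (1/((j:ℝ)+1)) (le_of_lt hb1) (by push_cast at hb2 ⊢; exact hb2) (by push_cast; exact le_rfl)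
            have hmem1 : b ∈ Set.Icc b (1/((j:ℝ)+1)) := by
              constructor <;> [exact le_rfl; exact (by push_cast at hb3 ⊢; exact hb3)]
            have hmem2 : 1/((j:ℝ)+1) ∈ Set.Icc b (1/((j:ℝ)+1)) := by
              constructor <;> [exact (by push_cast at hb3 ⊢; exact hb3); exact le_rfl]
            have hb3' : b ≤ 1/((j:ℝ)+1) := by push_cast at hb3 ⊢; exact hb3
            have hmono' := hmono hmem1 hmem2 hb3'
            have hbd : gm N (j+1) (1/((j:ℝ)+1)) = gm N j (1/((j:ℝ)+1)) := by
              unfold gm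
              have h2j1N : 2*(j+1) < N := by
                have hj10' : (0:ℝ) < (j:ℝ)+1 := by positivity
                have h1 : 2/(N:ℝ) < 1/((j:ℝ)+1) := lt_of_lt_of_le hb1 hb3'
                rw [div_lt_div_iff₀ hN0 hj10'] at h1
                exact_mod_cast (by push_cast; linarith : 2*((j+1:ℕ):ℝ) < (N:ℝ))
              rw [Finset.sum_range_succ, T_boundary N j (by omega), add_zero]
            rcases Nat.eq_zero_or_pos j with rfl | hj1
            · have : gm N 0 (1/((0:ℝ)+1)) = 1 := by
                unfold gm
                simp
              push_cast at hmono' hbd ⊢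
              linarith [hmono', hbd.le, hbd.ge]
            · have hchain : gm N j (1/((j:ℝ)+1)) ≤ 1 := by
                apply ihj (1/((j:ℝ)+1)) (lt_of_lt_of_le hb1 hb3')
                · exact le_rfl
                · apply div_le_div_of_nonneg_left (by norm_num) (by exact_mod_cast (by omega : 0 < j))
                  linarith
              linarith [hmono', hbd.le, hbd.ge]
        exact hQ k a h2a hka hak

/-- the closed-form sum S(N,w) for 1 - P_c(N-1; N, w), being a
probability (N random arcs of length 1-w cover the circle at least twice),
lies in [0,1] for w < 1 - 2/N. -/
theorem stmt11 (N : ℕ) (hN : 2 ≤ N) (w : ℝ) (hw0 : 0 ≤ w) (hw1 : w < 1)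
    (hw : w < 1 - 2 / N) :
    let S : ℝ := ∑ p ∈ Finset.range (⌊(1 - w)⁻¹⌋₊ + 1),
      (N.choose p : ℝ) * (1 - N * (1 - w)) *
        (1 - p * (1 - w)) ^ ((N : ℤ) - p - 1) *
        (1 - ((N : ℝ) - p) * (1 - w)) ^ ((p : ℤ) - 1)
    0 ≤ S ∧ S ≤ 1 := by
  intro S
  set a : ℝ := 1 - w with ha
  have ha0 : 0 < a := by simp [ha]; linarith
  have ha1 : a ≤ 1 := by simp [ha]; linarith
  have hN0 : (0:ℝ) < (N:ℝ) := by exact_mod_cast (by omega : 0 < N)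
  have h2a : 2/(N:ℝ) < a := by
    have : 2/(N:ℝ) < 1 - w := by linarith [hw]
    simpa [ha] using this
  have hN3 : 3 ≤ N := by
    by_contra h
    have hNle : (N:ℝ) ≤ 2 := by exact_mod_cast (by omega : N ≤ 2)
    have : (1:ℝ) ≤ 2/(N:ℝ) := by
      rw [le_div_iff₀ hN0]
      linarith
    linarith
  set k : ℕ := ⌊a⁻¹⌋₊ with hkdef
  have hainv1 : (1:ℝ) ≤ a⁻¹ := by
    rw [one_le_inv_iff₀]
    exact ⟨ha0, ha1⟩
  have hk1 : 1 ≤ k := by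
    rw [hkdef]
    exact Nat.le_floor (by exact_mod_cast hainv1)
  have hk0 : (0:ℝ) < (k:ℝ) := by exact_mod_cast (by omega : 0 < k)
  have hfl : (k:ℝ) ≤ a⁻¹ := Nat.floor_le (by positivity)
  have hfl2 : a⁻¹ < (k:ℝ) + 1 := Nat.lt_floor_add_one a⁻¹
  have hak : a ≤ 1/(k:ℝ) := by
    rw [le_div_iff₀ hk0]
    calc a * k ≤ a * a⁻¹ := by
          apply mul_le_mul_of_nonneg_left hfl (le_of_lt ha0)
      _ = 1 := mul_inv_cancel₀ (ne_of_gt ha0)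
  have hka : 1/((k:ℝ)+1) ≤ a := by
    have h1 : 1/((k:ℝ)+1) < 1/(a⁻¹) := by
      apply one_div_lt_one_div_of_lt (by positivity) hfl2
    rw [one_div a⁻¹, inv_inv] at h1
    linarith
  have h2kN : 2*k < N := by
    have h1 : 2/(N:ℝ) < 1/(k:ℝ) := lt_of_lt_of_le h2a hak
    rw [div_lt_div_iff₀ hN0 hk0] at h1
    exact_mod_cast (by linarith : 2*(k:ℝ) < (N:ℝ))
  have hNa : 2 < (N:ℝ)*a := by
    rw [div_lt_iff₀ hN0] at h2a
    linarith
  -- identify S with gm N k a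
  have hS : S = gm N k a := by
    show (∑ p ∈ Finset.range (k + 1),
      (N.choose p : ℝ) * (1 - N * a) * (1 - p * a) ^ ((N : ℤ) - p - 1) *
        (1 - ((N : ℝ) - p) * a) ^ ((p : ℤ) - 1)) = gm N k a
    rw [Finset.sum_range_succ']
    have h0 : (N.choose 0 : ℝ) * (1 - N * a) * (1 - (0:ℕ) * a) ^ ((N : ℤ) - (0:ℕ) - 1) *
        (1 - ((N : ℝ) - (0:ℕ)) * a) ^ (((0:ℕ) : ℤ) - 1) = 1 := by
      have hne : 1 - (N:ℝ)*a ≠ 0 := by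
        apply ne_of_lt
        linarith
      simp only [Nat.choose_zero_right, Nat.cast_zero, Nat.cast_one, zero_mul, sub_zero,
        one_zpow, mul_one, one_mul]
      rw [zero_sub, zpow_neg, zpow_one]
      exact mul_inv_cancel₀ hne
    rw [h0]
    have hterm : ∀ i ∈ Finset.range k,
        (N.choose (i+1) : ℝ) * (1 - N * a) * (1 - (i+1:ℕ) * a) ^ ((N : ℤ) - (i+1:ℕ) - 1) *
          (1 - ((N : ℝ) - (i+1:ℕ)) * a) ^ (((i+1:ℕ) : ℤ) - 1) = Tm N (i+1) a := by
      intro i hi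
      have hi' := Finset.mem_range.mp hi
      have e1 : (N : ℤ) - ((i+1:ℕ):ℤ) - 1 = ((N - (i+1) - 1 : ℕ) : ℤ) := by
        push_cast
        omega
      have e2 : (((i+1:ℕ)) : ℤ) - 1 = (((i+1) - 1 : ℕ) : ℤ) := by
        push_cast
        omega
      rw [e1, e2, zpow_natCast, zpow_natCast]
      rfl
    rw [Finset.sum_congr rfl hterm]
    unfold gm
    ring
  rw [hS]
  exact claim_all N k hk1 a h2a hka hak
end

section
/- For N iid uniform points on a unit circle with N ≥ 2 and 0 ≤ w < 1/N, the probability that all N circular spacings (gaps between consecutive points in circular order) exceed w equals (1 − Nw)^{N−1}. -/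
open MeasureTheory

lemma lint_Ioo (c : ℝ) (hc : 0 ≤ c) (k : ℕ) :
    ∫⁻ t in Set.Ioo 0 c, ENNReal.ofReal ((c - t)^k) = ENNReal.ofReal (c^(k+1)/(k+1)) := by
  rw [← ofReal_integral_eq_lintegral_ofReal]
  · congr 1
    have h1 : ∫ t in Set.Ioo 0 c, (c - t)^k = ∫ t in (0:ℝ)..c, (c-t)^k := by
      rw [intervalIntegral.integral_of_le hc, MeasureTheory.integral_Ioc_eq_integral_Ioo]
    rw [h1, intervalIntegral.integral_comp_sub_left (fun x => x^k) c]
    simp [integral_pow]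
  · exact ((continuous_const.sub continuous_id).pow k).integrableOn_Icc.mono_set
      Set.Ioo_subset_Icc_self
  · refine (ae_restrict_iff' measurableSet_Ioo).2 (ae_of_all _ fun t ht => ?_)
    exact pow_nonneg (by linarith [ht.2]) k

lemma simplex_meas (n : ℕ) (L : ℝ) :
    MeasurableSet {v : Fin n → ℝ | (∀ i, 0 < v i) ∧ ∑ i, v i < L} := by
  refine MeasurableSet.inter ?_ ?_
  · show MeasurableSet {v : Fin n → ℝ | ∀ i, 0 < v i}
    have : {v : Fin n → ℝ | ∀ i, 0 < v i} = ⋂ i : Fin n, {v | 0 < v i} := by ext v; simp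
    rw [this]
    exact MeasurableSet.iInter fun i => measurableSet_lt measurable_const (measurable_pi_apply i)
  · show MeasurableSet {v : Fin n → ℝ | ∑ i, v i < L}
    exact measurableSet_lt (Finset.measurable_sum _ fun i _ => measurable_pi_apply i)
      measurable_const

lemma simplex_lintegral :
    ∀ (n k : ℕ) (L : ℝ), 0 < L →
    ∫⁻ u : Fin n → ℝ, Set.indicator {v : Fin n → ℝ | (∀ i, 0 < v i) ∧ ∑ i, v i < L}
        (fun v => ENNReal.ofReal ((L - ∑ i, v i) ^ k)) u
      = ENNReal.ofReal (k.factorial * L^(n+k) / (n+k).factorial) := by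
  intro n
  induction n with
  | zero =>
    intro k L hL
    have hset : {v : Fin 0 → ℝ | (∀ i, 0 < v i) ∧ ∑ i, v i < L} = Set.univ := by
      ext v; simp [hL, Finset.univ_eq_empty]
    rw [hset, Set.indicator_univ]
    simp only [Finset.univ_eq_empty, Finset.sum_empty, sub_zero]
    rw [lintegral_const]
    have h1 : (volume : Measure (Fin 0 → ℝ)) Set.univ = 1 := by
      rw [volume_pi, Measure.pi_univ]; simp
    have h2 : (k.factorial : ℝ) * L ^ k / k.factorial = L ^ k := by
      field_simp
    rw [h1, mul_one, Nat.zero_add, h2]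
  | succ n ih =>
    intro k L hL
    set T : Set (ℝ × (Fin n → ℝ)) :=
      {p | (0 < p.1 ∧ ∀ i, 0 < p.2 i) ∧ p.1 + ∑ i, p.2 i < L} with hT
    have hTmeas : MeasurableSet T := by
      refine MeasurableSet.inter (MeasurableSet.inter ?_ ?_) ?_
      · exact measurableSet_lt measurable_const measurable_fst
      · show MeasurableSet {p : ℝ × (Fin n → ℝ) | ∀ i, 0 < p.2 i}
        have : {p : ℝ × (Fin n → ℝ) | ∀ i, 0 < p.2 i} = ⋂ i, {p | 0 < p.2 i} := by ext p; simp
        rw [this]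
        exact MeasurableSet.iInter fun i =>
          measurableSet_lt measurable_const (by fun_prop)
      · show MeasurableSet {p : ℝ × (Fin n → ℝ) | p.1 + ∑ i, p.2 i < L}
        exact measurableSet_lt (by fun_prop) measurable_const
    set G : ℝ × (Fin n → ℝ) → ENNReal :=
      T.indicator (fun p => ENNReal.ofReal ((L - (p.1 + ∑ i, p.2 i))^k)) with hG
    have hGmeas : Measurable G := by
      refine Measurable.indicator ?_ hTmeas
      fun_prop
    have e := MeasurableEquiv.piFinSuccAbove (fun _ : Fin (n+1) => ℝ) 0
    have hmp : MeasurePreserving (MeasurableEquiv.piFinSuccAbove (fun _ : Fin (n+1) => ℝ) 0)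
        volume ((volume : Measure ℝ).prod (volume : Measure (Fin n → ℝ))) :=
      measurePreserving_piFinSuccAbove (fun _ => volume) 0
    have key : ∀ x : Fin (n+1) → ℝ,
        Set.indicator {v : Fin (n+1) → ℝ | (∀ i, 0 < v i) ∧ ∑ i, v i < L}
          (fun v => ENNReal.ofReal ((L - ∑ i, v i) ^ k)) x
        = G (MeasurableEquiv.piFinSuccAbove (fun _ : Fin (n+1) => ℝ) 0 x) := by
      intro x
      have hex : (MeasurableEquiv.piFinSuccAbove (fun _ : Fin (n+1) => ℝ) 0) x
          = (x 0, fun j => x (Fin.succAbove 0 j)) := rfl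
      rw [hex, hG]
      have hsum : ∑ i, x i = x 0 + ∑ j, x (Fin.succAbove 0 j) := by
        rw [Fin.sum_univ_succAbove x 0]
      have hmem : x ∈ {v : Fin (n+1) → ℝ | (∀ i, 0 < v i) ∧ ∑ i, v i < L}
          ↔ ((x 0, fun j => x (Fin.succAbove 0 j)) : ℝ × (Fin n → ℝ)) ∈ T := by
        simp only [hT, Set.mem_setOf_eq, hsum]
        constructor
        · rintro ⟨h1, h2⟩
          exact ⟨⟨h1 0, fun j => h1 _⟩, h2⟩
        · rintro ⟨⟨h1, h2⟩, h3⟩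
          refine ⟨?_, h3⟩
          intro i
          rcases Fin.eq_zero_or_eq_succ i with rfl | ⟨j, rfl⟩
          · exact h1
          · have := h2 j
            simpa [Fin.succAbove_zero] using this
      by_cases hx : x ∈ {v : Fin (n+1) → ℝ | (∀ i, 0 < v i) ∧ ∑ i, v i < L}
      · rw [Set.indicator_of_mem hx, Set.indicator_of_mem (hmem.1 hx)]
        simp [hsum]
      · rw [Set.indicator_of_notMem hx, Set.indicator_of_notMem (fun h => hx (hmem.2 h))]
    calc ∫⁻ u : Fin (n+1) → ℝ, Set.indicator {v : Fin (n+1) → ℝ | (∀ i, 0 < v i) ∧ ∑ i, v i < L}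
          (fun v => ENNReal.ofReal ((L - ∑ i, v i) ^ k)) u
        = ∫⁻ x, G ((MeasurableEquiv.piFinSuccAbove (fun _ : Fin (n+1) => ℝ) 0) x) := by
          simp_rw [key]
      _ = ∫⁻ p, G p ∂((volume : Measure ℝ).prod (volume : Measure (Fin n → ℝ))) :=
          hmp.lintegral_comp hGmeas
      _ = ∫⁻ u : Fin n → ℝ, ∫⁻ t : ℝ, G (t, u) := lintegral_prod_symm' G hGmeas
      _ = ∫⁻ u : Fin n → ℝ, Set.indicator {v : Fin n → ℝ | (∀ i, 0 < v i) ∧ ∑ i, v i < L}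
            (fun v => ENNReal.ofReal ((L - ∑ i, v i) ^ (k+1)) * ENNReal.ofReal (1/(k+1))) u := by
          congr 1
          funext u
          by_cases hu : (∀ i, 0 < u i) ∧ ∑ i, u i < L
          · set cc : ℝ := L - ∑ i, u i with hcc
            have hcc0 : 0 < cc := by simp [hcc]; linarith [hu.2]
            have hslice : ∀ t : ℝ, G (t, u)
                = Set.indicator (Set.Ioo 0 cc) (fun t => ENNReal.ofReal ((cc - t)^k)) t := by
              intro t
              rw [hG]
              by_cases ht : t ∈ Set.Ioo 0 cc
              · rw [Set.indicator_of_mem ht]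
                have : ((t, u) : ℝ × (Fin n → ℝ)) ∈ T := by
                  refine ⟨⟨ht.1, hu.1⟩, by have := ht.2; simp [hcc] at this ⊢; linarith⟩
                rw [Set.indicator_of_mem this]
                simp [hcc]; ring_nf
              · rw [Set.indicator_of_notMem ht]
                have : ((t, u) : ℝ × (Fin n → ℝ)) ∉ T := by
                  intro hmem
                  apply ht
                  refine ⟨hmem.1.1, ?_⟩
                  have := hmem.2
                  simp [hcc]; linarith [hmem.2]
                rw [Set.indicator_of_notMem this]
            simp_rw [hslice]
            rw [lintegral_indicator measurableSet_Ioo, lint_Ioo cc hcc0.le k,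
              Set.indicator_of_mem
                (show u ∈ {v : Fin n → ℝ | (∀ i, 0 < v i) ∧ ∑ i, v i < L} from hu)]
            rw [← ENNReal.ofReal_mul (by positivity)]
            congr 1
            rw [← hcc]
            ring
          · have hslice : ∀ t : ℝ, G (t, u) = 0 := by
              intro t
              rw [hG, Set.indicator_of_notMem]
              intro hmem
              apply hu
              refine ⟨hmem.1.2, ?_⟩
              have h3 := hmem.2
              have h4 := hmem.1.1
              linarith
            simp_rw [hslice]
            rw [lintegral_zero, Set.indicator_of_notMem
                (show u ∉ {v : Fin n → ℝ | (∀ i, 0 < v i) ∧ ∑ i, v i < L} from hu)]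
      _ = ENNReal.ofReal (k.factorial * L^(n+1+k) / (n+1+k).factorial) := by
          simp_rw [Set.indicator_mul_const]
          rw [lintegral_mul_const' _ _ (by simp), ih (k+1) L hL,
            ← ENNReal.ofReal_mul (by positivity)]
          congr 1
          have h1 : ((k+1).factorial : ℝ) = (k+1) * k.factorial := by
            rw [Nat.factorial_succ]; push_cast; ring
          have h2 : n + (k+1) = n + 1 + k := by ring
          rw [h2, h1]
          have h3 : ((n+1+k).factorial : ℝ) ≠ 0 := Nat.cast_ne_zero.2 (Nat.factorial_ne_zero _)
          field_simp

lemma gap_region_meas (n : ℕ) (w : ℝ) :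
    MeasurableSet {x : Fin (n+1) → ℝ | 0 ≤ x 0 ∧ (∀ i : Fin n, x i.castSucc + w < x i.succ)
        ∧ x (Fin.last n) < 1 ∧ x (Fin.last n) + w < x 0 + 1} := by
  refine MeasurableSet.inter ?_ (MeasurableSet.inter ?_ (MeasurableSet.inter ?_ ?_))
  · exact measurableSet_le measurable_const (measurable_pi_apply 0)
  · show MeasurableSet {x : Fin (n+1) → ℝ | ∀ i : Fin n, x i.castSucc + w < x i.succ}
    have : {x : Fin (n+1) → ℝ | ∀ i : Fin n, x i.castSucc + w < x i.succ}
        = ⋂ i : Fin n, {x | x i.castSucc + w < x i.succ} := by ext x; simp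
    rw [this]
    exact MeasurableSet.iInter fun i => measurableSet_lt (by fun_prop) (by fun_prop)
  · show MeasurableSet {x : Fin (n+1) → ℝ | x (Fin.last n) < 1}
    exact measurableSet_lt (by fun_prop) measurable_const
  · show MeasurableSet {x : Fin (n+1) → ℝ | x (Fin.last n) + w < x 0 + 1}
    exact measurableSet_lt (by fun_prop) (by fun_prop)

lemma ordered_vol (n : ℕ) (w : ℝ) (hw0 : 0 ≤ w) (hL : 0 < 1 - (n+1) * w) :
    volume {x : Fin (n+1) → ℝ | 0 ≤ x 0 ∧ (∀ i : Fin n, x i.castSucc + w < x i.succ)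
        ∧ x (Fin.last n) < 1 ∧ x (Fin.last n) + w < x 0 + 1}
    = ENNReal.ofReal ((1-(n+1)*w)^(n+1)/(n+1).factorial + w * (1-(n+1)*w)^n / n.factorial) := by
  classical
  set L : ℝ := 1 - (n+1) * w with hLdef
  set A : Set (Fin (n+1) → ℝ) := {x : Fin (n+1) → ℝ | 0 ≤ x 0
      ∧ (∀ i : Fin n, x i.castSucc + w < x i.succ)
      ∧ x (Fin.last n) < 1 ∧ x (Fin.last n) + w < x 0 + 1} with hA
  have hAmeas : MeasurableSet A := gap_region_meas n w
  -- the triangular linear map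
  set M : Matrix (Fin (n+1)) (Fin (n+1)) ℝ := fun i j => if j ≤ i then 1 else 0 with hM
  set f : (Fin (n+1) → ℝ) →ₗ[ℝ] (Fin (n+1) → ℝ) := Matrix.toLin' M with hf
  have hfapp : ∀ (g : Fin (n+1) → ℝ) (i : Fin (n+1)), f g i = ∑ k ∈ Finset.Iic i, g k := by
    intro g i
    rw [hf, Matrix.toLin'_apply]
    show (∑ j, M i j * g j) = _
    rw [Finset.sum_congr rfl (fun j _ => show M i j * g j = if j ∈ Finset.Iic i then g j else 0
      by rw [hM]; by_cases h : j ≤ i <;> simp [h])]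
    rw [Finset.sum_ite_mem, Finset.univ_inter]
  have hdet : LinearMap.det f = 1 := by
    rw [hf, LinearMap.det_toLin']
    have htri : M.BlockTriangular OrderDual.toDual := by
      intro i j hij
      have : ¬ (j ≤ i) := by
        simp only [OrderDual.toDual_lt_toDual] at hij
        exact not_le.2 hij
      simp [hM, this]
    rw [Matrix.det_of_lowerTriangular M htri]
    simp [hM]
  have hfmeas : Measurable f := f.continuous_on_pi.measurable
  have hmapf : ∀ (B : Set (Fin (n+1) → ℝ)), MeasurableSet B → volume (f ⁻¹' B) = volume B := by
    intro B hB
    rw [← Measure.map_apply hfmeas hB,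
      Real.map_linearMap_volume_pi_eq_smul_volume_pi (by rw [hdet]; norm_num), hdet]
    simp
  -- translation
  set cvec : Fin (n+1) → ℝ := fun i => (i : ℕ) * w with hcvec
  have htrans : volume ((fun x => x + cvec) ⁻¹' A) = volume A :=
    measure_preimage_add_right volume cvec A
  have hAt : MeasurableSet ((fun x => x + cvec) ⁻¹' A) :=
    hAmeas.preimage (measurable_id.add_const cvec)
  -- the pullback region
  set R : Set (Fin (n+1) → ℝ) := f ⁻¹' ((fun x => x + cvec) ⁻¹' A) with hR
  have hvolR : volume R = volume A := by rw [hR, hmapf _ hAt, htrans]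
  -- identify R
  have hRdesc : R = {g : Fin (n+1) → ℝ | (0 ≤ g 0 ∧ g 0 + ∑ j, g (Fin.succ j) < L + w)
      ∧ (∀ j : Fin n, 0 < g (Fin.succ j)) ∧ ∑ j, g (Fin.succ j) < L} := by
    ext g
    have hx := fun i => hfapp g i
    -- x = f g + cvec
    set x : Fin (n+1) → ℝ := f g + cvec with hxdef
    have hx0 : x 0 = g 0 := by
      show f g 0 + cvec 0 = g 0
      rw [hfapp]
      have : Finset.Iic (0 : Fin (n+1)) = {0} := by
        ext k; simp [Fin.le_zero_iff]
      rw [this]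
      simp [hcvec]
    have hstep : ∀ i : Fin n, x i.succ = x i.castSucc + g i.succ + w := by
      intro i
      show f g i.succ + cvec i.succ = f g i.castSucc + cvec i.castSucc + g i.succ + w
      rw [hfapp, hfapp]
      have hins : Finset.Iic i.succ = insert i.succ (Finset.Iic i.castSucc) := by
        ext k
        simp only [Finset.mem_Iic, Finset.mem_insert]
        constructor
        · intro h
          rcases eq_or_lt_of_le h with h1 | h1
          · exact Or.inl h1
          · exact Or.inr (Fin.le_castSucc_iff.2 h1)
        · rintro (rfl | h)
          · exact le_refl _
          · exact le_trans h (le_of_lt (Fin.castSucc_lt_succ : i.castSucc < i.succ))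
      have hnotmem : i.succ ∉ Finset.Iic i.castSucc := by
        simp only [Finset.mem_Iic]
        exact not_le.2 (Fin.castSucc_lt_succ : i.castSucc < i.succ)
      rw [hins, Finset.sum_insert hnotmem]
      simp only [hcvec, Fin.val_succ, Fin.coe_castSucc]
      push_cast
      ring
    have hlast : x (Fin.last n) = (∑ j, g j) + n * w := by
      show f g (Fin.last n) + cvec (Fin.last n) = _
      rw [hfapp]
      have : Finset.Iic (Fin.last n) = Finset.univ := by
        ext k; simp [Fin.le_last]
      rw [this]
      simp [hcvec, Fin.val_last]
    have hsum : ∑ j, g j = g 0 + ∑ j, g (Fin.succ j) := Fin.sum_univ_succ g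
    have hmem : g ∈ R ↔ x ∈ A := Iff.rfl
    rw [hmem, hA]
    simp only [Set.mem_setOf_eq]
    constructor
    · rintro ⟨h1, h2, h3, h4⟩
      refine ⟨⟨by rwa [hx0] at h1, ?_⟩, fun j => ?_, ?_⟩
      · rw [hlast, hsum] at h3
        rw [hLdef]; push_cast at h3 ⊢; linarith
      · have := h2 j
        rw [hstep j] at this
        linarith
      · rw [hlast, hsum] at h4
        rw [hx0] at h4
        rw [hLdef]; push_cast at h4 ⊢; linarith
    · rintro ⟨⟨h1, h2⟩, h3, h4⟩
      refine ⟨by rwa [hx0], fun i => by rw [hstep i]; linarith [h3 i], ?_, ?_⟩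
      · rw [hlast, hsum]
        rw [hLdef] at h2; push_cast at h2 ⊢; linarith
      · rw [hlast, hsum, hx0]
        rw [hLdef] at h4; push_cast at h4 ⊢; linarith
  -- compute volume R via the product decomposition
  rw [← hvolR, hRdesc]
  have hmp : MeasurePreserving (MeasurableEquiv.piFinSuccAbove (fun _ : Fin (n+1) => ℝ) 0)
      volume ((volume : Measure ℝ).prod (volume : Measure (Fin n → ℝ))) :=
    measurePreserving_piFinSuccAbove (fun _ => volume) 0
  set R' : Set (ℝ × (Fin n → ℝ)) := {p | (0 ≤ p.1 ∧ p.1 + ∑ i, p.2 i < L + w)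
      ∧ (∀ i, 0 < p.2 i) ∧ ∑ i, p.2 i < L} with hR'
  have hR'meas : MeasurableSet R' := by
    refine MeasurableSet.inter (MeasurableSet.inter ?_ ?_) (MeasurableSet.inter ?_ ?_)
    · exact measurableSet_le measurable_const measurable_fst
    · show MeasurableSet {p : ℝ × (Fin n → ℝ) | p.1 + ∑ i, p.2 i < L + w}
      exact measurableSet_lt (by fun_prop) measurable_const
    · show MeasurableSet {p : ℝ × (Fin n → ℝ) | ∀ i, 0 < p.2 i}
      have : {p : ℝ × (Fin n → ℝ) | ∀ i, 0 < p.2 i} = ⋂ i, {p | 0 < p.2 i} := by ext p; simp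
      rw [this]
      exact MeasurableSet.iInter fun i => measurableSet_lt measurable_const (by fun_prop)
    · show MeasurableSet {p : ℝ × (Fin n → ℝ) | ∑ i, p.2 i < L}
      exact measurableSet_lt (by fun_prop) measurable_const
  have hpre : {g : Fin (n+1) → ℝ | (0 ≤ g 0 ∧ g 0 + ∑ j, g (Fin.succ j) < L + w)
      ∧ (∀ j : Fin n, 0 < g (Fin.succ j)) ∧ ∑ j, g (Fin.succ j) < L}
      = (MeasurableEquiv.piFinSuccAbove (fun _ : Fin (n+1) => ℝ) 0) ⁻¹' R' := by
    ext g
    have hex : (MeasurableEquiv.piFinSuccAbove (fun _ : Fin (n+1) => ℝ) 0) g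
        = (g 0, fun j => g (Fin.succ j)) := rfl
    simp only [Set.mem_preimage, hex, hR', Set.mem_setOf_eq]
  rw [hpre, hmp.measure_preimage hR'meas.nullMeasurableSet,
    Measure.prod_apply_symm hR'meas]
  have hslice : ∀ u : Fin n → ℝ,
      (volume : Measure ℝ) ((fun t => (t, u)) ⁻¹' R')
      = Set.indicator {v : Fin n → ℝ | (∀ i, 0 < v i) ∧ ∑ i, v i < L}
          (fun v => ENNReal.ofReal ((L - ∑ i, v i)^1) + ENNReal.ofReal w) u := by
    intro u
    by_cases hu : (∀ i, 0 < u i) ∧ ∑ i, u i < L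
    · have hset : ((fun t => (t, u)) ⁻¹' R') = Set.Ico 0 (L + w - ∑ i, u i) := by
        ext t
        simp only [Set.mem_preimage, hR', Set.mem_setOf_eq, Set.mem_Ico]
        constructor
        · rintro ⟨⟨h1, h2⟩, _⟩; exact ⟨h1, by linarith⟩
        · rintro ⟨h1, h2⟩; exact ⟨⟨h1, by linarith⟩, hu⟩
      rw [hset, Real.volume_Ico,
        Set.indicator_of_mem (show u ∈ {v : Fin n → ℝ | (∀ i, 0 < v i) ∧ ∑ i, v i < L} from hu)]
      rw [pow_one, ← ENNReal.ofReal_add (by linarith [hu.2]) hw0]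
      congr 1; ring
    · have hset : ((fun t => (t, u)) ⁻¹' R') = ∅ := by
        ext t
        simp only [Set.mem_preimage, hR', Set.mem_setOf_eq, Set.mem_empty_iff_false,
          iff_false]
        rintro ⟨⟨h1, h2⟩, h3, h4⟩
        exact hu ⟨h3, h4⟩
      rw [hset,
        Set.indicator_of_notMem
          (show u ∉ {v : Fin n → ℝ | (∀ i, 0 < v i) ∧ ∑ i, v i < L} from hu)]
      simp
  simp_rw [hslice]
  have hsplit : ∀ u : Fin n → ℝ,
      Set.indicator {v : Fin n → ℝ | (∀ i, 0 < v i) ∧ ∑ i, v i < L}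
        (fun v => ENNReal.ofReal ((L - ∑ i, v i)^1) + ENNReal.ofReal w) u
      = Set.indicator {v : Fin n → ℝ | (∀ i, 0 < v i) ∧ ∑ i, v i < L}
          (fun v => ENNReal.ofReal ((L - ∑ i, v i)^1)) u
        + Set.indicator {v : Fin n → ℝ | (∀ i, 0 < v i) ∧ ∑ i, v i < L}
            (fun _ => ENNReal.ofReal w) u := by
    intro u
    by_cases hu : u ∈ {v : Fin n → ℝ | (∀ i, 0 < v i) ∧ ∑ i, v i < L}
    · rw [Set.indicator_of_mem hu, Set.indicator_of_mem hu, Set.indicator_of_mem hu]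
    · rw [Set.indicator_of_notMem hu, Set.indicator_of_notMem hu,
        Set.indicator_of_notMem hu, add_zero]
  simp_rw [hsplit]
  have hvolS : volume {v : Fin n → ℝ | (∀ i, 0 < v i) ∧ ∑ i, v i < L}
      = ENNReal.ofReal (L^n / n.factorial) := by
    have h0 := simplex_lintegral n 0 L hL
    simp only [pow_zero, ENNReal.ofReal_one] at h0
    rw [lintegral_indicator_const (simplex_meas n L)] at h0
    simpa using h0
  rw [lintegral_add_left, simplex_lintegral n 1 L hL,
    lintegral_indicator_const (simplex_meas n L), hvolS,
    ← ENNReal.ofReal_mul hw0, ← ENNReal.ofReal_add]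
  · congr 1
    simp only [Nat.factorial_one, Nat.cast_one, one_mul]
    ring
  · positivity
  · positivity
  · exact Measurable.indicator (by fun_prop) (simplex_meas n L)

/-- Circular distance of two points of [0,1) viewed on a circle of circumference 1. -/
noncomputable def circDist (a b : ℝ) : ℝ := min |a - b| (1 - |a - b|)

lemma circDist_symm (a b : ℝ) : circDist a b = circDist b a := by
  unfold circDist; rw [abs_sub_comm]

lemma circDist_self (a : ℝ) : circDist a a = 0 := by
  unfold circDist; simp

lemma sorted_eq (n : ℕ) [NeZero n] (w : ℝ) (hw0 : 0 ≤ w) :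
    {p : Fin (n+1) → ℝ | ((∀ i, p i ∈ Set.Ico (0:ℝ) 1) ∧
        ∀ i j, i ≠ j → w < circDist (p i) (p j))} ∩ {p | StrictMono p}
    = {x : Fin (n+1) → ℝ | 0 ≤ x 0 ∧ (∀ i : Fin n, x i.castSucc + w < x i.succ)
        ∧ x (Fin.last n) < 1 ∧ x (Fin.last n) + w < x 0 + 1} := by
  ext p
  simp only [Set.mem_inter_iff, Set.mem_setOf_eq, Set.mem_Ico]
  constructor
  · rintro ⟨⟨hico, hpair⟩, hmono⟩
    refine ⟨(hico 0).1, fun i => ?_, (hico (Fin.last n)).2, ?_⟩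
    · have hlt : p i.castSucc < p i.succ := hmono (Fin.castSucc_lt_succ : i.castSucc < i.succ)
      have hw := hpair i.castSucc i.succ (Fin.castSucc_lt_succ : i.castSucc < i.succ).ne
      rw [circDist] at hw
      have habs : |p i.castSucc - p i.succ| = p i.succ - p i.castSucc := by
        rw [abs_sub_comm, abs_of_pos (by linarith)]
      rw [habs] at hw
      have := lt_min_iff.1 hw
      linarith [this.1]
    · have h0l : (0 : Fin (n+1)) < Fin.last n := by
        rw [Fin.lt_iff_val_lt_val, Fin.val_last]
        simpa using Nat.pos_of_ne_zero (NeZero.ne n)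
      have hlt : p 0 < p (Fin.last n) := hmono h0l
      have hw := hpair 0 (Fin.last n) h0l.ne
      rw [circDist] at hw
      have habs : |p 0 - p (Fin.last n)| = p (Fin.last n) - p 0 := by
        rw [abs_sub_comm, abs_of_pos (by linarith)]
      rw [habs] at hw
      have := (lt_min_iff.1 hw).2
      linarith
  · rintro ⟨h0, hgap, hlast, hwrap⟩
    have hmono : StrictMono p := by
      rw [Fin.strictMono_iff_lt_succ]
      intro i
      have := hgap i
      linarith
    have hbound : ∀ i, 0 ≤ p i ∧ p i < 1 := by
      intro i
      constructor
      · calc (0:ℝ) ≤ p 0 := h0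
          _ ≤ p i := hmono.monotone (Fin.zero_le i)
      · calc p i ≤ p (Fin.last n) := hmono.monotone (Fin.le_last i)
          _ < 1 := hlast
    have hgap' : ∀ i j : Fin (n+1), i < j → p i + w < p j := by
      intro i j hij
      have hi : (i : ℕ) < n := by
        have h1 : (i : ℕ) < (j : ℕ) := hij
        have h2 : (j : ℕ) ≤ n := Fin.le_last j
        omega
      set i' : Fin n := ⟨i, hi⟩ with hi'
      have heq : i = i'.castSucc := by
        apply Fin.ext; simp [hi']
      have hle : i'.succ ≤ j := by
        rw [Fin.le_iff_val_le_val, Fin.val_succ]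
        exact hij
      calc p i + w = p i'.castSucc + w := by rw [heq]
        _ < p i'.succ := hgap i'
        _ ≤ p j := hmono.monotone hle
    have hwrap' : ∀ i j : Fin (n+1), i < j → p j + w < p i + 1 := by
      intro i j hij
      calc p j + w ≤ p (Fin.last n) + w := by
            linarith [hmono.monotone (Fin.le_last j)]
        _ < p 0 + 1 := hwrap
        _ ≤ p i + 1 := by linarith [hmono.monotone (Fin.zero_le i)]
    have hcd : ∀ i j : Fin (n+1), i < j → w < circDist (p i) (p j) := by
      intro i j hij
      rw [circDist]
      have h1 := hgap' i j hij
      have h2 := hwrap' i j hij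
      have habs : |p i - p j| = p j - p i := by
        rw [abs_sub_comm, abs_of_pos (by linarith [hmono hij])]
      rw [habs]
      exact lt_min_iff.2 ⟨by linarith, by linarith⟩
    refine ⟨⟨fun i => ⟨(hbound i).1, (hbound i).2⟩, fun i j hij => ?_⟩, hmono⟩
    rcases lt_or_gt_of_ne hij with h | h
    · exact hcd i j h
    · rw [circDist_symm]
      exact hcd j i h

/-- for N iid uniform points on a unit-circumference circle,
the probability that all N circular spacings exceed w (equivalently, all
pairwise circular distances exceed w) equals (1 - Nw)^{N-1}. -/
theorem stmt13 (N : ℕ) (hN : 2 ≤ N) (w : ℝ) (hw0 : 0 ≤ w) (hw : w < 1 / N) :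
    volume {p : Fin N → ℝ | (∀ i, p i ∈ Set.Ico (0 : ℝ) 1) ∧
        ∀ i j, i ≠ j → w < circDist (p i) (p j)} =
      ENNReal.ofReal ((1 - N * w) ^ (N - 1)) := by
  obtain ⟨n, rfl⟩ : ∃ n, N = n + 1 := ⟨N - 1, by omega⟩
  have hn : n ≠ 0 := by omega
  have _ : NeZero n := ⟨hn⟩
  have hNpos : (0:ℝ) < ((n:ℝ)+1) := by positivity
  have hL : 0 < 1 - ((n:ℝ)+1) * w := by
    push_cast at hw
    rw [lt_div_iff₀ hNpos] at hw
    linarith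
  set S : Set (Fin (n+1) → ℝ) := {p | (∀ i, p i ∈ Set.Ico (0 : ℝ) 1) ∧
      ∀ i j, i ≠ j → w < circDist (p i) (p j)} with hS
  -- measurability of S
  have hcdcont : ∀ i j : Fin (n+1), Continuous fun p : Fin (n+1) → ℝ => circDist (p i) (p j) := by
    intro i j
    unfold circDist
    exact Continuous.min ((continuous_apply i).sub (continuous_apply j)).abs
      (continuous_const.sub ((continuous_apply i).sub (continuous_apply j)).abs)
  have hSmeas : MeasurableSet S := by
    rw [hS]
    refine MeasurableSet.inter ?_ ?_
    · show MeasurableSet {p : Fin (n+1) → ℝ | ∀ i, p i ∈ Set.Ico (0:ℝ) 1}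
      have : {p : Fin (n+1) → ℝ | ∀ i, p i ∈ Set.Ico (0:ℝ) 1}
          = ⋂ i, (fun p : Fin (n+1) → ℝ => p i) ⁻¹' (Set.Ico (0:ℝ) 1) := by ext p; simp
      rw [this]
      exact MeasurableSet.iInter fun i => (measurable_pi_apply i) measurableSet_Ico
    · show MeasurableSet {p : Fin (n+1) → ℝ | ∀ i j, i ≠ j → w < circDist (p i) (p j)}
      have : {p : Fin (n+1) → ℝ | ∀ i j, i ≠ j → w < circDist (p i) (p j)}
          = ⋂ i, ⋂ j, {p | i ≠ j → w < circDist (p i) (p j)} := by ext p; simp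
      rw [this]
      refine MeasurableSet.iInter fun i => MeasurableSet.iInter fun j => ?_
      by_cases hij : i = j
      · have : {p : Fin (n+1) → ℝ | i ≠ j → w < circDist (p i) (p j)} = Set.univ := by
          ext p; simp [hij]
        rw [this]; exact MeasurableSet.univ
      · have : {p : Fin (n+1) → ℝ | i ≠ j → w < circDist (p i) (p j)}
            = {p | w < circDist (p i) (p j)} := by
          ext p; simp [hij]
        rw [this]
        exact measurableSet_lt measurable_const (hcdcont i j).measurable
  -- injectivity on S
  have hinj : ∀ p ∈ S, Function.Injective p := by
    intro p hp i j hpij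
    by_contra hij
    have := hp.2 i j hij
    rw [hpij, circDist_self] at this
    linarith
  -- the strict-mono pieces
  set Mset : Equiv.Perm (Fin (n+1)) → Set (Fin (n+1) → ℝ) :=
    fun σ => {p | StrictMono (p ∘ σ)} with hMset
  have hMmeas : ∀ σ, MeasurableSet (Mset σ) := by
    intro σ
    have : Mset σ = ⋂ i, ⋂ j, {p : Fin (n+1) → ℝ | i < j → p (σ i) < p (σ j)} := by
      ext p
      simp only [hMset, Set.mem_setOf_eq, Set.mem_iInter]
      exact ⟨fun h i j hij => h hij, fun h a b hab => h a b hab⟩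
    rw [this]
    refine MeasurableSet.iInter fun i => MeasurableSet.iInter fun j => ?_
    by_cases hij : i < j
    · have : {p : Fin (n+1) → ℝ | i < j → p (σ i) < p (σ j)} = {p | p (σ i) < p (σ j)} := by
        ext p; simp [hij]
      rw [this]
      exact measurableSet_lt (measurable_pi_apply _) (measurable_pi_apply _)
    · have : {p : Fin (n+1) → ℝ | i < j → p (σ i) < p (σ j)} = Set.univ := by
        ext p; simp [hij]
      rw [this]; exact MeasurableSet.univ
  -- covering
  have hcover : S = ⋃ σ : Equiv.Perm (Fin (n+1)), S ∩ Mset σ := by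
    apply Set.Subset.antisymm
    · intro p hp
      refine Set.mem_iUnion.2 ⟨Tuple.sort p, hp, ?_⟩
      show StrictMono (p ∘ Tuple.sort p)
      exact (Tuple.monotone_sort p).strictMono_of_injective
        ((hinj p hp).comp (Tuple.sort p).injective)
    · exact Set.iUnion_subset fun σ => Set.inter_subset_left
  -- disjointness
  have hdisj : Pairwise (Function.onFun Disjoint fun σ => S ∩ Mset σ) := by
    intro σ τ hne
    rw [Function.onFun, Set.disjoint_left]
    rintro p ⟨hpS, hpσ⟩ ⟨_, hpτ⟩
    have heq : p ∘ σ = p ∘ τ :=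
      Tuple.unique_monotone (StrictMono.monotone hpσ) (StrictMono.monotone hpτ)
    exact hne (Equiv.ext fun i => hinj p hpS (congrFun heq i))
  -- invariance of S
  have hSinv1 : ∀ (p : Fin (n+1) → ℝ) (σ : Equiv.Perm (Fin (n+1))), p ∈ S → p ∘ σ ∈ S := by
    rintro p σ ⟨h1, h2⟩
    exact ⟨fun i => h1 (σ i), fun i j hij => h2 (σ i) (σ j) fun h => hij (σ.injective h)⟩
  -- each piece has the same volume as the sorted one
  have hperm : ∀ σ : Equiv.Perm (Fin (n+1)),
      volume (S ∩ Mset σ) = volume (S ∩ Mset 1) := by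
    intro σ
    set T := MeasurableEquiv.piCongrLeft (fun _ : Fin (n+1) => ℝ) (σ.symm : Fin (n+1) ≃ Fin (n+1)) with hT
    have hTapp : ∀ (p : Fin (n+1) → ℝ) (b : Fin (n+1)), T p b = p (σ b) := by
      intro p b
      have h := MeasurableEquiv.piCongrLeft_apply_apply (β := fun _ : Fin (n+1) => ℝ)
        (σ.symm : Fin (n+1) ≃ Fin (n+1)) p (σ b)
      simpa using h
    have hTfun : ∀ p : Fin (n+1) → ℝ, T p = p ∘ σ := fun p => funext fun b => hTapp p b
    have hpre : S ∩ Mset σ = T ⁻¹' (S ∩ Mset 1) := by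
      ext p
      simp only [Set.mem_preimage, Set.mem_inter_iff, hTfun]
      constructor
      · rintro ⟨hpS, hpσ⟩
        refine ⟨hSinv1 p σ hpS, ?_⟩
        show StrictMono ((p ∘ σ) ∘ (1 : Equiv.Perm (Fin (n+1))))
        exact hpσ
      · rintro ⟨hpS, hpσ⟩
        have hai : (p ∘ σ) ∘ (σ.symm : Equiv.Perm (Fin (n+1))) = p := by
          funext i; simp
        have hback : p ∈ S := by
          have := hSinv1 (p ∘ σ) σ.symm hpS
          rwa [hai] at this
        refine ⟨hback, ?_⟩
        show StrictMono (p ∘ σ)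
        have : StrictMono ((p ∘ σ) ∘ (1 : Equiv.Perm (Fin (n+1)))) := hpσ
        simpa using this
    rw [hpre]
    exact (volume_measurePreserving_piCongrLeft (fun _ : Fin (n+1) => ℝ) _).measure_preimage
      ((hSmeas.inter (hMmeas 1)).nullMeasurableSet)
  -- put it together
  have hM1 : Mset 1 = {p : Fin (n+1) → ℝ | StrictMono p} := by
    ext p
    show StrictMono (p ∘ (1 : Equiv.Perm (Fin (n+1)))) ↔ StrictMono p
    constructor
    · intro h; simpa using h
    · intro h; simpa using h
  have hvol : volume S = (n+1).factorial •
      ENNReal.ofReal ((1-((n:ℝ)+1)*w)^(n+1)/(n+1).factorial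
        + w * (1-((n:ℝ)+1)*w)^n / n.factorial) := by
    rw [hcover, measure_iUnion hdisj (fun σ => hSmeas.inter (hMmeas σ)), tsum_fintype]
    have hsorted : volume (S ∩ Mset 1)
        = ENNReal.ofReal ((1-((n:ℝ)+1)*w)^(n+1)/(n+1).factorial
            + w * (1-((n:ℝ)+1)*w)^n / n.factorial) := by
      rw [hM1, hS, sorted_eq n w hw0, ordered_vol n w hw0 hL]
    calc (∑ σ : Equiv.Perm (Fin (n+1)), volume (S ∩ Mset σ))
        = ∑ _σ : Equiv.Perm (Fin (n+1)), volume (S ∩ Mset 1) :=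
          Finset.sum_congr rfl fun σ _ => hperm σ
      _ = (Fintype.card (Equiv.Perm (Fin (n+1)))) • volume (S ∩ Mset 1) := by
          rw [Finset.sum_const, Finset.card_univ]
      _ = (n+1).factorial • volume (S ∩ Mset 1) := by
          rw [Fintype.card_perm, Fintype.card_fin]
      _ = _ := by rw [hsorted]
  rw [hvol]
  -- final arithmetic
  have hfac1 : ((n+1).factorial : ℝ) ≠ 0 := Nat.cast_ne_zero.2 (Nat.factorial_ne_zero _)
  have hfac2 : ((n).factorial : ℝ) ≠ 0 := Nat.cast_ne_zero.2 (Nat.factorial_ne_zero _)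
  have hfacsucc : ((n+1).factorial : ℝ) = ((n:ℝ)+1) * n.factorial := by
    rw [Nat.factorial_succ]; push_cast; ring
  rw [nsmul_eq_mul, ← ENNReal.ofReal_natCast, ← ENNReal.ofReal_mul (by positivity)]
  congr 1
  have hexp : (n + 1) - 1 = n := by omega
  rw [hexp]
  push_cast
  set L : ℝ := 1 - ((n:ℝ)+1) * w with hLdef
  calc ((n+1).factorial : ℝ) * (L^(n+1)/(n+1).factorial + w * L^n / n.factorial)
      = L^(n+1) + ((n:ℝ)+1) * w * L^n := by
        rw [hfacsucc]; field_simp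
    _ = L^n * (L + ((n:ℝ)+1) * w) := by ring
    _ = L^n := by rw [hLdef]; ring_nf
    _ = (1 - ((n:ℝ)+1) * w)^n := by rw [hLdef]
end

section
/- Let n ≥ 2 and define the recursion f_n(x) = Σ_{i=1}^{n} ∫_0^1 (f_{i−1} * f_{n−i})(x/p + 1) · p^{n−2} dp with f_0 = δ (Dirac delta, convolution identity) and f_1 = indicator of [−1,1]. Then under the scaled bilateral Laplace transform t̃_n(s) := s^n · L{f_n}(s), the recursion becomes t̃_n(s) = Σ_{i=1}^{n} ∫_0^s e^p · t̃_{i−1}(p) t̃_{n−i}(p) dp, with t̃_0(s) = 1 and t̃_1(s) = e^s − e^{−s}. -/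
open MeasureTheory intervalIntegral

open MeasureTheory intervalIntegral Set

namespace Stmt15Aux

/-- A function is "good with radius a": measurable, vanishing outside [-a,a], bounded. -/
def Good (g : ℝ → ℝ) (a : ℝ) : Prop :=
  Measurable g ∧ (∀ x : ℝ, x ∉ Set.Icc (-a) a → g x = 0) ∧
    ∃ C : ℝ, 0 ≤ C ∧ ∀ x, |g x| ≤ C

theorem Good.mono {g : ℝ → ℝ} {a a' : ℝ} (hg : Good g a) (h : a ≤ a') : Good g a' := by
  refine ⟨hg.1, fun x hx => hg.2.1 x ?_, hg.2.2⟩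
  intro hx'
  exact hx ⟨by linarith [hx'.1], by linarith [hx'.2]⟩

theorem Good.integrable_exp_mul {g : ℝ → ℝ} {a : ℝ} (hg : Good g a) (q : ℝ) :
    Integrable (fun x => Real.exp (-(q * x)) * g x) := by
  obtain ⟨C, hC0, hC⟩ := hg.2.2
  refine Integrable.mono' (g := (Set.Icc (-a) a).indicator fun _ => Real.exp (|q| * a) * C)
    ?_ ?_ ?_
  · rw [integrable_indicator_iff measurableSet_Icc]
    exact integrableOn_const measure_Icc_lt_top.ne
  · exact ((Real.measurable_exp.comp ((measurable_const.mul measurable_id).neg)).mul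
      hg.1).aestronglyMeasurable
  · filter_upwards with x
    by_cases hx : x ∈ Set.Icc (-a) a
    · rw [Set.indicator_of_mem hx]
      have h1 : |x| ≤ a := abs_le.2 ⟨hx.1, hx.2⟩
      have h2 : -(q * x) ≤ |q| * a := by
        calc -(q * x) ≤ |q * x| := neg_le_abs _
        _ = |q| * |x| := abs_mul _ _
        _ ≤ |q| * a := mul_le_mul_of_nonneg_left h1 (abs_nonneg q)
      have : ‖Real.exp (-(q * x)) * g x‖ = Real.exp (-(q * x)) * |g x| := by
        rw [norm_mul, Real.norm_eq_abs, Real.norm_eq_abs, abs_of_pos (Real.exp_pos _)]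
      rw [this]
      exact mul_le_mul (Real.exp_le_exp.2 h2) (hC x) (abs_nonneg _) (Real.exp_pos _).le
    · rw [Set.indicator_of_notMem hx, hg.2.1 x hx, mul_zero, norm_zero]

/-- convolution of two good functions is good with the sum of radii. -/
theorem conv_good {g h : ℝ → ℝ} {a b : ℝ} (hg : Good g a) (hh : Good h b)
    (ha : 0 ≤ a) :
    Good (fun x => ∫ y : ℝ, g y * h (x - y)) (a + b) := by
  obtain ⟨Cg, hCg0, hCg⟩ := hg.2.2
  obtain ⟨Ch, hCh0, hCh⟩ := hh.2.2
  refine ⟨?_, ?_, ?_⟩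
  · have : Measurable fun z : ℝ × ℝ => g z.2 * h (z.1 - z.2) :=
      (hg.1.comp measurable_snd).mul (hh.1.comp (measurable_fst.sub measurable_snd))
    exact (this.stronglyMeasurable.integral_prod_right').measurable
  · intro x hx
    have hz : ∀ y : ℝ, g y * h (x - y) = 0 := by
      intro y
      by_cases hy : y ∈ Set.Icc (-a) a
      · have : x - y ∉ Set.Icc (-b) b := by
          intro hxy
          apply hx
          constructor
          · have := hxy.1; have := hy.1; simp only [neg_add] at *; linarith
          · have := hxy.2; have := hy.2; linarith
        rw [hh.2.1 _ this, mul_zero]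
      · rw [hg.2.1 _ hy, zero_mul]
    simp only [hz, integral_zero]
  · refine ⟨Cg * Ch * (2 * a), by positivity, fun x => ?_⟩
    have key : ‖∫ y : ℝ, g y * h (x - y)‖ ≤
        ∫ y : ℝ, (Set.Icc (-a) a).indicator (fun _ => Cg * Ch) y := by
      refine norm_integral_le_of_norm_le ?_ ?_
      · rw [integrable_indicator_iff measurableSet_Icc]
        exact integrableOn_const measure_Icc_lt_top.ne
      · filter_upwards with y
        by_cases hy : y ∈ Set.Icc (-a) a
        · rw [Set.indicator_of_mem hy]
          rw [Real.norm_eq_abs, abs_mul]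
          exact mul_le_mul (hCg y) (hCh _) (abs_nonneg _) hCg0
        · rw [Set.indicator_of_notMem hy, hg.2.1 _ hy, zero_mul, norm_zero]
    rw [Real.norm_eq_abs] at key
    refine key.trans ?_
    rw [integral_indicator_const _ measurableSet_Icc]
    rw [Real.volume_real_Icc_of_le (by linarith), smul_eq_mul]
    have : a - -a = 2 * a := by ring
    rw [this]; ring_nf; exact le_refl _

/-- Laplace transform of a convolution is a product. -/
theorem laplace_conv {g h : ℝ → ℝ} {a b : ℝ} (hg : Good g a) (hh : Good h b) (q : ℝ) :
    ∫ u : ℝ, Real.exp (-(q * u)) * ∫ y : ℝ, g y * h (u - y) =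
      (∫ y : ℝ, Real.exp (-(q * y)) * g y) * ∫ z : ℝ, Real.exp (-(q * z)) * h z := by
  obtain ⟨Cg, hCg0, hCg⟩ := hg.2.2
  obtain ⟨Ch, hCh0, hCh⟩ := hh.2.2
  have step1 : ∀ u : ℝ, Real.exp (-(q * u)) * ∫ y : ℝ, g y * h (u - y) =
      ∫ y : ℝ, Real.exp (-(q * u)) * (g y * h (u - y)) := by
    intro u; rw [MeasureTheory.integral_const_mul]
  simp only [step1]
  have hint : Integrable (Function.uncurry fun u y : ℝ =>
      Real.exp (-(q * u)) * (g y * h (u - y))) (volume.prod volume) := by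
    have hm : Measurable fun z : ℝ × ℝ => Real.exp (-(q * z.1)) * (g z.2 * h (z.1 - z.2)) :=
      (Real.measurable_exp.comp ((measurable_const.mul measurable_fst).neg)).mul
        ((hg.1.comp measurable_snd).mul (hh.1.comp (measurable_fst.sub measurable_snd)))
    refine Integrable.mono' (g := (Set.Icc (-(a+b)) (a+b) ×ˢ Set.Icc (-a) a).indicator
      fun _ => Real.exp (|q| * (a + b)) * (Cg * Ch)) ?_ hm.aestronglyMeasurable ?_
    · rw [integrable_indicator_iff (measurableSet_Icc.prod measurableSet_Icc)]
      refine integrableOn_const (LT.lt.ne ?_)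
      rw [Measure.prod_prod]
      exact ENNReal.mul_lt_top measure_Icc_lt_top measure_Icc_lt_top
    · filter_upwards with z
      obtain ⟨u, y⟩ := z
      simp only [Function.uncurry_apply_pair]
      by_cases hy : y ∈ Set.Icc (-a) a
      · by_cases huy : u - y ∈ Set.Icc (-b) b
        · have hu : u ∈ Set.Icc (-(a+b)) (a+b) := by
            constructor
            · have := hy.1; have := huy.1; simp only [neg_add] at *; linarith
            · have := hy.2; have := huy.2; linarith
          rw [Set.indicator_of_mem (Set.mem_prod.2 ⟨hu, hy⟩)]
          have h1 : |u| ≤ a + b := abs_le.2 ⟨hu.1, hu.2⟩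
          have h2 : -(q * u) ≤ |q| * (a + b) := by
            calc -(q * u) ≤ |q * u| := neg_le_abs _
            _ = |q| * |u| := abs_mul _ _
            _ ≤ |q| * (a + b) := mul_le_mul_of_nonneg_left h1 (abs_nonneg q)
          have : ‖Real.exp (-(q * u)) * (g y * h (u - y))‖ =
              Real.exp (-(q * u)) * |g y * h (u - y)| := by
            rw [norm_mul, Real.norm_eq_abs, Real.norm_eq_abs, abs_of_pos (Real.exp_pos _)]
          rw [this]
          refine mul_le_mul (Real.exp_le_exp.2 h2) ?_ (abs_nonneg _) (Real.exp_pos _).le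
          rw [abs_mul]
          exact mul_le_mul (hCg y) (hCh _) (abs_nonneg _) hCg0
        · rw [hh.2.1 _ huy, mul_zero, mul_zero, norm_zero]
          exact Set.indicator_nonneg (fun _ _ => by positivity) _
      · rw [hg.2.1 _ hy, zero_mul, mul_zero, norm_zero]
        exact Set.indicator_nonneg (fun _ _ => by positivity) _
  rw [integral_integral_swap hint]
  have step2 : ∀ y : ℝ, (∫ u : ℝ, Real.exp (-(q * u)) * (g y * h (u - y))) =
      (Real.exp (-(q * y)) * g y) * ∫ z : ℝ, Real.exp (-(q * z)) * h z := by
    intro y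
    have e1 : (∫ u : ℝ, Real.exp (-(q * u)) * (g y * h (u - y))) =
        ∫ v : ℝ, Real.exp (-(q * (v + y))) * (g y * h v) := by
      rw [← integral_add_right_eq_self (fun u => Real.exp (-(q * u)) * (g y * h (u - y))) y]
      simp only [add_sub_cancel_right]
    rw [e1]
    have e2 : ∀ v : ℝ, Real.exp (-(q * (v + y))) * (g y * h v) =
        (Real.exp (-(q * y)) * g y) * (Real.exp (-(q * v)) * h v) := by
      intro v
      rw [show -(q * (v + y)) = -(q * y) + -(q * v) by ring, Real.exp_add]
      ring
    simp only [e2]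
    rw [MeasureTheory.integral_const_mul]
  simp only [step2]
  rw [MeasureTheory.integral_mul_const]

/-- support estimate for the rescaled function. -/
theorem supp_aux {G : ℝ → ℝ} {n : ℕ} (hG : Good G ((n : ℝ) - 1)) :
    ∀ x : ℝ, x ∉ Set.Icc (-(n : ℝ)) n → ∀ p : ℝ, p ∈ Set.Ioc (0 : ℝ) 1 →
      G (x / p + 1) = 0 := by
  intro x hx p hp
  apply hG.2.1
  have hx' : x < -(n : ℝ) ∨ (n : ℝ) < x := by
    by_contra hcon
    push_neg at hcon
    exact hx ⟨hcon.1, hcon.2⟩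
  have hn0 : (0 : ℝ) ≤ (n : ℝ) := by positivity
  rcases hx' with hx' | hx'
  · intro hmem
    have h1 : x < -(n : ℝ) * p := by
      have : -(n : ℝ) ≤ -(n : ℝ) * p := by nlinarith [hp.1, hp.2]
      linarith
    have h2 : x / p < -(n : ℝ) := by
      rw [div_lt_iff₀ hp.1]; linarith
    have hc : -((n : ℝ) - 1) ≤ x / p + 1 := hmem.1
    linarith
  · intro hmem
    have h1 : (n : ℝ) * p < x := by nlinarith [hp.1, hp.2]
    have h2 : (n : ℝ) < x / p := by
      rw [lt_div_iff₀ hp.1]; linarith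
    have := hmem.2
    linarith

/-- change of variables x = p (u - 1). -/
theorem sub1 (G : ℝ → ℝ) {p : ℝ} (hp : 0 < p) (s : ℝ) :
    ∫ x : ℝ, Real.exp (-(s * x)) * G (x / p + 1) =
      p * (Real.exp (s * p) * ∫ u : ℝ, Real.exp (-(s * p * u)) * G u) := by
  set H : ℝ → ℝ := fun x => Real.exp (-(s * x)) * G (x / p + 1) with hH
  have h2 : (∫ u : ℝ, H (p * (u - 1))) = ∫ u : ℝ, H (p * u) := by
    rw [← integral_sub_right_eq_self (fun u => H (p * u)) 1]
  have h3 : (∫ u : ℝ, H (p * u)) = |p⁻¹| • ∫ x, H x :=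
    MeasureTheory.Measure.integral_comp_mul_left H p
  have h4 : (∫ u : ℝ, H (p * (u - 1))) =
      Real.exp (s * p) * ∫ u : ℝ, Real.exp (-(s * p * u)) * G u := by
    have e : ∀ u : ℝ, H (p * (u - 1)) =
        Real.exp (s * p) * (Real.exp (-(s * p * u)) * G u) := by
      intro u
      simp only [hH]
      rw [mul_div_cancel_left₀ _ hp.ne']
      rw [sub_add_cancel]
      rw [show -(s * (p * (u - 1))) = s * p + -(s * p * u) by ring, Real.exp_add]
      ring
    simp only [e]
    rw [MeasureTheory.integral_const_mul]
  have h5 : (∫ x, H x) = |p| • ∫ u : ℝ, H (p * (u - 1)) := by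
    rw [h2, h3, smul_smul, ← abs_mul, mul_inv_cancel₀ hp.ne', abs_one, one_smul]
  rw [h5, h4, abs_of_pos hp, smul_eq_mul]

theorem key {G : ℝ → ℝ} {n : ℕ} (hn : 2 ≤ n) (hG : Good G ((n : ℝ) - 1)) {s : ℝ}
    (hs : s ≠ 0) :
    s ^ n * ∫ x : ℝ, Real.exp (-(s * x)) * ∫ p in (0 : ℝ)..1, G (x / p + 1) * p ^ (n - 2) =
      ∫ p in (0 : ℝ)..s,
        Real.exp p * (p ^ (n - 1) * ∫ u : ℝ, Real.exp (-(p * u)) * G u) := by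
  obtain ⟨C, hC0, hC⟩ := hG.2.2
  have hn0 : (0 : ℝ) ≤ (n : ℝ) := by positivity
  have e0 : ∀ x : ℝ, (∫ p in (0 : ℝ)..1, G (x / p + 1) * p ^ (n - 2)) =
      ∫ p in Set.Ioc (0 : ℝ) 1, G (x / p + 1) * p ^ (n - 2) := fun x =>
    intervalIntegral.integral_of_le zero_le_one
  simp only [e0]
  have e1 : ∀ x : ℝ, Real.exp (-(s * x)) * ∫ p in Set.Ioc (0 : ℝ) 1, G (x / p + 1) * p ^ (n - 2)
      = ∫ p in Set.Ioc (0 : ℝ) 1, Real.exp (-(s * x)) * (G (x / p + 1) * p ^ (n - 2)) :=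
    fun x => (MeasureTheory.integral_const_mul _ _).symm
  simp only [e1]
  have hm : Measurable fun z : ℝ × ℝ =>
      Real.exp (-(s * z.1)) * (G (z.1 / z.2 + 1) * z.2 ^ (n - 2)) :=
    (Real.measurable_exp.comp ((measurable_const.mul measurable_fst).neg)).mul
      ((hG.1.comp ((measurable_fst.div measurable_snd).add measurable_const)).mul
        (measurable_snd.pow_const _))
  have hint : Integrable (Function.uncurry fun x p : ℝ =>
      Real.exp (-(s * x)) * (G (x / p + 1) * p ^ (n - 2)))
      (volume.prod (volume.restrict (Set.Ioc (0 : ℝ) 1))) := by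
    refine Integrable.mono'
      (g := (Set.Icc (-(n : ℝ)) n ×ˢ (Set.univ : Set ℝ)).indicator
        fun _ => Real.exp (|s| * n) * C) ?_ hm.aestronglyMeasurable ?_
    · rw [integrable_indicator_iff (measurableSet_Icc.prod MeasurableSet.univ)]
      refine integrableOn_const (LT.lt.ne ?_)
      rw [Measure.prod_prod, Measure.restrict_apply_univ]
      exact ENNReal.mul_lt_top measure_Icc_lt_top measure_Ioc_lt_top
    · have hae : ∀ᵐ z : ℝ × ℝ ∂(volume.prod (volume.restrict (Set.Ioc (0 : ℝ) 1))),
          z.2 ∈ Set.Ioc (0 : ℝ) 1 := by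
        have hrw : (volume : Measure ℝ).prod (volume.restrict (Set.Ioc (0 : ℝ) 1)) =
            ((volume : Measure ℝ).prod volume).restrict
              ((Set.univ : Set ℝ) ×ˢ Set.Ioc (0 : ℝ) 1) := by
          rw [← Measure.prod_restrict, Measure.restrict_univ]
        rw [hrw]
        filter_upwards [ae_restrict_mem (MeasurableSet.univ.prod measurableSet_Ioc)] with z hz
        exact hz.2
      filter_upwards [hae] with z hz
      obtain ⟨x, p⟩ := z
      simp only [Function.uncurry_apply_pair]
      simp only [Set.mem_Ioc] at hz
      by_cases hx : x ∈ Set.Icc (-(n : ℝ)) n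
      · rw [Set.indicator_of_mem (Set.mem_prod.2 ⟨hx, Set.mem_univ _⟩)]
        have h1 : |x| ≤ (n : ℝ) := abs_le.2 ⟨hx.1, hx.2⟩
        have h2 : -(s * x) ≤ |s| * n := by
          calc -(s * x) ≤ |s * x| := neg_le_abs _
          _ = |s| * |x| := abs_mul _ _
          _ ≤ |s| * n := mul_le_mul_of_nonneg_left h1 (abs_nonneg s)
        have heq : ‖Real.exp (-(s * x)) * (G (x / p + 1) * p ^ (n - 2))‖ =
            Real.exp (-(s * x)) * |G (x / p + 1) * p ^ (n - 2)| := by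
          rw [norm_mul, Real.norm_eq_abs, Real.norm_eq_abs, abs_of_pos (Real.exp_pos _)]
        rw [heq]
        refine mul_le_mul (Real.exp_le_exp.2 h2) ?_ (abs_nonneg _) (Real.exp_pos _).le
        rw [abs_mul]
        have hp1 : |p ^ (n - 2)| ≤ 1 := by
          rw [abs_pow, abs_of_pos hz.1]
          exact pow_le_one₀ hz.1.le hz.2
        calc |G (x / p + 1)| * |p ^ (n - 2)| ≤ C * 1 :=
          mul_le_mul (hC _) hp1 (abs_nonneg _) hC0
        _ = C := mul_one C
      · rw [supp_aux hG x hx p ⟨hz.1, hz.2⟩, zero_mul, mul_zero, norm_zero]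
        exact Set.indicator_nonneg (fun _ _ => by positivity) _
  rw [MeasureTheory.integral_integral_swap hint]
  have e2 : (∫ p in Set.Ioc (0 : ℝ) 1,
        ∫ x : ℝ, Real.exp (-(s * x)) * (G (x / p + 1) * p ^ (n - 2))) =
      ∫ p in Set.Ioc (0 : ℝ) 1,
        p ^ (n - 1) * (Real.exp (s * p) * ∫ u : ℝ, Real.exp (-(s * p * u)) * G u) := by
    refine setIntegral_congr_fun measurableSet_Ioc ?_
    intro p hp
    have hp0 : 0 < p := hp.1
    have e3 : ∀ x : ℝ, Real.exp (-(s * x)) * (G (x / p + 1) * p ^ (n - 2)) =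
        (Real.exp (-(s * x)) * G (x / p + 1)) * p ^ (n - 2) := fun x => by ring
    simp only [e3]
    rw [MeasureTheory.integral_mul_const, sub1 G hp0 s]
    have hpow : p * p ^ (n - 2) = p ^ (n - 1) := by
      rw [← pow_succ']
      congr 1
      omega
    calc p * (Real.exp (s * p) * ∫ u : ℝ, Real.exp (-(s * p * u)) * G u) * p ^ (n - 2)
        = (p * p ^ (n - 2)) * (Real.exp (s * p) * ∫ u : ℝ, Real.exp (-(s * p * u)) * G u) := by
          ring
    _ = p ^ (n - 1) * (Real.exp (s * p) * ∫ u : ℝ, Real.exp (-(s * p * u)) * G u) := by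
          rw [hpow]
  rw [e2]
  set Φ : ℝ → ℝ := fun q => Real.exp q * (q ^ (n - 1) * ∫ u : ℝ, Real.exp (-(q * u)) * G u)
    with hΦ
  have hsub : (∫ q in (0 : ℝ)..s, Φ q) = s • ∫ p in (0 : ℝ)..1, Φ (s * p) := by
    rw [intervalIntegral.integral_comp_mul_left Φ hs, mul_zero, mul_one, smul_smul,
      mul_inv_cancel₀ hs, one_smul]
  have hΦval : ∀ p : ℝ, Φ (s * p) =
      s ^ (n - 1) * (p ^ (n - 1) * (Real.exp (s * p) * ∫ u : ℝ, Real.exp (-(s * p * u)) * G u))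
      := by
    intro p
    simp only [hΦ]
    rw [mul_pow]
    ring
  show _ = ∫ q in (0 : ℝ)..s, Φ q
  rw [hsub]
  simp only [hΦval]
  rw [intervalIntegral.integral_const_mul, intervalIntegral.integral_of_le zero_le_one,
    smul_eq_mul]
  rw [show s * (s ^ (n - 1) * ∫ p in Set.Ioc (0:ℝ) 1, p ^ (n - 1) *
      (Real.exp (s * p) * ∫ u : ℝ, Real.exp (-(s * p * u)) * G u)) =
    (s * s ^ (n - 1)) * ∫ p in Set.Ioc (0:ℝ) 1, p ^ (n - 1) *
      (Real.exp (s * p) * ∫ u : ℝ, Real.exp (-(s * p * u)) * G u) from by ring]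
  congr 1
  rw [← pow_succ']
  congr 1
  omega

/-- each term of the recursion is good. -/
theorem term_good {G : ℝ → ℝ} {m : ℕ} (hm : 2 ≤ m) (hG : Good G ((m : ℝ) - 1)) :
    Good (fun x => ∫ p in (0 : ℝ)..1, G (x / p + 1) * p ^ (m - 2)) ((m : ℕ) : ℝ) := by
  obtain ⟨C, hC0, hC⟩ := hG.2.2
  refine ⟨?_, ?_, ?_⟩
  · have e : (fun x => ∫ p in (0 : ℝ)..1, G (x / p + 1) * p ^ (m - 2)) =
        fun x => ∫ p in Set.Ioc (0 : ℝ) 1, G (x / p + 1) * p ^ (m - 2) :=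
      funext fun x => intervalIntegral.integral_of_le zero_le_one
    rw [e]
    have hm' : Measurable fun z : ℝ × ℝ => G (z.1 / z.2 + 1) * z.2 ^ (m - 2) :=
      (hG.1.comp ((measurable_fst.div measurable_snd).add measurable_const)).mul
        (measurable_snd.pow_const _)
    exact hm'.stronglyMeasurable.integral_prod_right'.measurable
  · intro x hx
    show (∫ p in (0 : ℝ)..1, G (x / p + 1) * p ^ (m - 2)) = 0
    rw [intervalIntegral.integral_of_le zero_le_one]
    rw [setIntegral_congr_fun measurableSet_Ioc
      (g := fun _ => (0 : ℝ)) fun p hp => by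
        rw [supp_aux hG x hx p hp, zero_mul]]
    exact integral_zero _ _
  · refine ⟨C, hC0, fun x => ?_⟩
    have := intervalIntegral.norm_integral_le_of_norm_le_const
      (f := fun p => G (x / p + 1) * p ^ (m - 2)) (a := 0) (b := 1) (C := C) ?_
    · rw [Real.norm_eq_abs] at this
      simpa using this
    · intro p hp
      rw [Set.uIoc_of_le zero_le_one] at hp
      rw [Real.norm_eq_abs, abs_mul]
      have hp1 : |p ^ (m - 2)| ≤ 1 := by
        rw [abs_pow, abs_of_pos hp.1]
        exact pow_le_one₀ hp.1.le hp.2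
      calc |G (x / p + 1)| * |p ^ (m - 2)| ≤ C * 1 :=
        mul_le_mul (hC _) hp1 (abs_nonneg _) hC0
      _ = C := mul_one C

theorem good_sum {ι : Type*} (t : Finset ι) (g : ι → ℝ → ℝ) {a : ℝ}
    (h : ∀ i ∈ t, Good (g i) a) : Good (fun x => ∑ i ∈ t, g i x) a := by
  classical
  refine ⟨Finset.measurable_sum t fun i hi => (h i hi).1,
    fun x hx => Finset.sum_eq_zero fun i hi => (h i hi).2.1 x hx, ?_⟩
  induction t using Finset.induction_on with
  | empty => exact ⟨0, le_refl 0, fun x => by simp⟩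
  | insert _ _ hni ih =>
    rename_i i t'
    obtain ⟨C1, hC10, hC1⟩ := (h i (Finset.mem_insert_self i t')).2.2
    obtain ⟨C2, hC20, hC2⟩ := ih fun j hj => h j (Finset.mem_insert_of_mem hj)
    refine ⟨C1 + C2, by linarith, fun x => ?_⟩
    show |∑ j ∈ insert i t', g j x| ≤ C1 + C2
    rw [Finset.sum_insert hni]
    exact (abs_add_le _ _).trans (add_le_add (hC1 x) (hC2 x))

end Stmt15Aux

/-- under the scaled bilateral Laplace transform
T n s = sⁿ · L{f_n}(s) (with T 0 = 1, since f_0 is the Dirac delta, the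
identity of convolution), the spatial recursion
f_n(x) = Σ_{i=1}^n ∫_0^1 (f_{i-1} * f_{n-i})(x/p + 1) p^{n-2} dp
becomes T n s = Σ_{i=1}^n ∫_0^s e^p T_{i-1}(p) T_{n-i}(p) dp, with
T 0 = 1 and T 1 s = e^s - e^{-s}. -/
theorem stmt15 (f : ℕ → ℝ → ℝ)
    (h1 : f 1 = Set.indicator (Set.Icc (-1 : ℝ) 1) fun _ => (1 : ℝ))
    -- convolution, with f 0 = Dirac delta acting as the identity of convolution
    (conv : ℕ → ℕ → ℝ → ℝ)
    (hconv0l : ∀ j, conv 0 j = f j)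
    (hconv0r : ∀ i, conv i 0 = f i)
    (hconv : ∀ i j, 1 ≤ i → 1 ≤ j →
      ∀ x : ℝ, conv i j x = ∫ y : ℝ, f i y * f j (x - y))
    (hrec : ∀ n, 2 ≤ n → ∀ x : ℝ,
      f n x = ∑ i ∈ Finset.Icc 1 n,
        ∫ p in (0 : ℝ)..1, conv (i - 1) (n - i) (x / p + 1) * p ^ (n - 2)) :
    let T : ℕ → ℝ → ℝ := fun n s =>
      if n = 0 then 1 else s ^ n * ∫ x : ℝ, Real.exp (-(s * x)) * f n x
    (∀ s : ℝ, T 1 s = Real.exp s - Real.exp (-s)) ∧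
      ∀ n, 2 ≤ n → ∀ s : ℝ,
        T n s = ∑ i ∈ Finset.Icc 1 n,
          ∫ p in (0 : ℝ)..s, Real.exp p * T (i - 1) p * T (n - i) p := by
  intro T
  classical
  have convs_good : ∀ m, 2 ≤ m →
      (∀ j, 1 ≤ j → j < m → Stmt15Aux.Good (f j) (j : ℝ)) →
      ∀ i ∈ Finset.Icc 1 m, Stmt15Aux.Good (conv (i - 1) (m - i)) ((m : ℝ) - 1) := by
    intro m hm2 hprev i hi
    simp only [Finset.mem_Icc] at hi
    by_cases hi1 : i = 1
    · subst hi1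
      rw [show (1 : ℕ) - 1 = 0 from rfl, hconv0l]
      refine Stmt15Aux.Good.mono (hprev (m - 1) (by omega) (by omega)) (le_of_eq ?_)
      rw [Nat.cast_sub (by omega : 1 ≤ m)]
      norm_num
    · by_cases him : i = m
      · subst him
        rw [Nat.sub_self, hconv0r]
        refine Stmt15Aux.Good.mono (hprev (i - 1) (by omega) (by omega)) (le_of_eq ?_)
        rw [Nat.cast_sub (by omega : 1 ≤ i)]
        norm_num
      · have hk : 1 ≤ i - 1 := by omega
        have hl : 1 ≤ m - i := by omega
        have e : conv (i - 1) (m - i) = fun x => ∫ y : ℝ, f (i - 1) y * f (m - i) (x - y) :=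
          funext (hconv _ _ hk hl)
        rw [e]
        have g1 := hprev (i - 1) hk (by omega)
        have g2 := hprev (m - i) hl (by omega)
        refine Stmt15Aux.Good.mono (Stmt15Aux.conv_good g1 g2 (by positivity)) (le_of_eq ?_)
        rw [Nat.cast_sub (by omega : 1 ≤ i), Nat.cast_sub (by omega : i ≤ m)]
        ring
  have hgoodf : ∀ m, 1 ≤ m → Stmt15Aux.Good (f m) (m : ℝ) := by
    intro m
    induction m using Nat.strong_induction_on with
    | _ m ih =>
      intro hm1
      by_cases hm2 : 2 ≤ m
      · have hcg := convs_good m hm2 fun j hj1 hj2 => ih j hj2 hj1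
        have hfm : f m = fun x => ∑ i ∈ Finset.Icc 1 m,
            ∫ p in (0 : ℝ)..1, conv (i - 1) (m - i) (x / p + 1) * p ^ (m - 2) :=
          funext (hrec m hm2)
        rw [hfm]
        exact Stmt15Aux.good_sum _ _ fun i hi => Stmt15Aux.term_good hm2 (hcg i hi)
      · have hm1' : m = 1 := by omega
        subst hm1'
        rw [h1]
        refine ⟨measurable_const.indicator measurableSet_Icc, ?_, 1, zero_le_one, ?_⟩
        · intro x hx
          apply Set.indicator_of_notMem
          push_cast at hx
          exact hx
        · intro x
          by_cases hx : x ∈ Set.Icc (-1 : ℝ) 1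
          · rw [Set.indicator_of_mem hx]; norm_num
          · rw [Set.indicator_of_notMem hx]; norm_num
  constructor
  · -- T 1 s = e^s - e^{-s}
    intro s
    simp only [T]
    rw [if_neg one_ne_zero]
    simp only [h1]
    have e1 : ∀ x : ℝ, Real.exp (-(s * x)) * (Set.Icc (-1 : ℝ) 1).indicator
        (fun _ => (1 : ℝ)) x = (Set.Icc (-1 : ℝ) 1).indicator
        (fun x => Real.exp (-(s * x))) x := by
      intro x
      by_cases hx : x ∈ Set.Icc (-1 : ℝ) 1
      · rw [Set.indicator_of_mem hx, Set.indicator_of_mem hx, mul_one]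
      · rw [Set.indicator_of_notMem hx, Set.indicator_of_notMem hx, mul_zero]
    simp only [e1]
    rw [MeasureTheory.integral_indicator measurableSet_Icc]
    rw [MeasureTheory.integral_Icc_eq_integral_Ioc]
    rw [← intervalIntegral.integral_of_le (show (-1 : ℝ) ≤ 1 by norm_num)]
    by_cases hs : s = 0
    · subst hs; simp
    · have e2 : ∀ x : ℝ, -(s * x) = -s * x := fun x => by ring
      simp only [e2]
      rw [intervalIntegral.integral_comp_mul_left Real.exp (neg_ne_zero.2 hs)]
      rw [integral_exp]
      simp only [smul_eq_mul, pow_one, mul_neg_one, mul_one, neg_neg]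
      rw [inv_neg, show s * (-s⁻¹ * (Real.exp (-s) - Real.exp s)) =
        (s * s⁻¹) * (Real.exp s - Real.exp (-s)) from by ring, mul_inv_cancel₀ hs, one_mul]
  · intro n hn s
    simp only [T]
    rw [if_neg (by omega : ¬n = 0)]
    by_cases hs : s = 0
    · subst hs
      rw [zero_pow (by omega : n ≠ 0), zero_mul]
      exact (Finset.sum_eq_zero fun i hi => intervalIntegral.integral_same).symm
    · have hcg := convs_good n hn fun j hj1 _ => hgoodf j hj1
      have hfs : (fun x : ℝ => Real.exp (-(s * x)) * f n x) = fun x =>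
          ∑ i ∈ Finset.Icc 1 n, Real.exp (-(s * x)) *
            ∫ p in (0 : ℝ)..1, conv (i - 1) (n - i) (x / p + 1) * p ^ (n - 2) := by
        funext x
        rw [hrec n hn x, Finset.mul_sum]
      rw [hfs]
      rw [MeasureTheory.integral_finset_sum _ fun i hi =>
        (Stmt15Aux.term_good hn (hcg i hi)).integrable_exp_mul s]
      rw [Finset.mul_sum]
      refine Finset.sum_congr rfl fun i hi => ?_
      rw [Stmt15Aux.key hn (hcg i hi) hs]
      refine intervalIntegral.integral_congr fun p _ => ?_
      simp only [Finset.mem_Icc] at hi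
      have hLc : (∫ u : ℝ, Real.exp (-(p * u)) * conv (i - 1) (n - i) u) =
          (if i - 1 = 0 then (1 : ℝ) else ∫ x : ℝ, Real.exp (-(p * x)) * f (i - 1) x) *
          (if n - i = 0 then (1 : ℝ) else ∫ x : ℝ, Real.exp (-(p * x)) * f (n - i) x) := by
        by_cases hi1 : i = 1
        · subst hi1
          rw [show (1 : ℕ) - 1 = 0 from rfl, hconv0l, if_pos rfl, if_neg (by omega), one_mul]
        · by_cases him : i = n
          · subst him
            rw [Nat.sub_self, hconv0r, if_neg (by omega), if_pos rfl, mul_one]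
          · have hk : 1 ≤ i - 1 := by omega
            have hl : 1 ≤ n - i := by omega
            rw [if_neg (by omega), if_neg (by omega)]
            simp only [hconv (i - 1) (n - i) hk hl]
            exact Stmt15Aux.laplace_conv (hgoodf (i - 1) hk) (hgoodf (n - i) hl) p
      rw [hLc]
      have hT : ∀ m : ℕ, (if m = 0 then (1 : ℝ)
          else p ^ m * ∫ x : ℝ, Real.exp (-(p * x)) * f m x) =
          p ^ m * (if m = 0 then (1 : ℝ) else ∫ x : ℝ, Real.exp (-(p * x)) * f m x) := by
        intro m
        by_cases h : m = 0
        · subst h; simp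
        · rw [if_neg h, if_neg h]
      rw [hT (i - 1), hT (n - i)]
      have hpw : p ^ (i - 1) * p ^ (n - i) = p ^ (n - 1) := by
        rw [← pow_add]
        congr 1
        omega
      rw [← hpw]
      ring
end
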